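/- arXiv:2509.02177 — 9 statements merged into one kernel-verified Lean document; each statement's English description precedes it below -/
import Mathlib

section
/- Let R be a commutative F_2-algebra with involution ω, d(x) = x + ω(x), S the fixed subring, I = d(R) viewed as an ideal of S, and RI the ideal of R generated by I. For any n ≥ 1, the preimage under d of the ideal I^(n+1) (of S) equals S + R·Iⁿ (as a subset of R). -/
open Finset

/-!
Write `d x = x + ω x`. A product `P` of `n` values of `d` is `ω`-fixed, so `d (r * P) = d r * P`:
the products of `n + 1` values of `d` are exactly the images under `d` of the generators `r * P`
of the ideal `R·Iⁿ`, and since `d` is additive, `I^(n+1) = d(R·Iⁿ)`. Hence `d x ∈ I^(n+1)` iff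
`x ∈ ker d + R·Iⁿ`, and in characteristic `2` the kernel of `d` is the fixed ring `S`.
-/

open Pointwise

section InvolutionTrace

variable {R : Type*} [CommRing R] (ω : R →+* R)

def involutionTrace : R →+ R := AddMonoidHom.id R + ω.toAddMonoidHom

@[simp]
theorem involutionTrace_apply (x : R) : involutionTrace ω x = x + ω x := rfl

/-- Products of `n` values of `d`: they generate `Iⁿ` additively and `R·Iⁿ` as an ideal. -/
def traceProducts (n : ℕ) : Set R := {z | ∃ f : Fin n → R, z = ∏ i, (f i + ω (f i))}

variable {ω}

theorem map_involutionTrace (hω : Function.Involutive ω) (x : R) :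
    ω (involutionTrace ω x) = involutionTrace ω x := by
  simp [hω x, add_comm]

theorem map_prod_involutionTrace (hω : Function.Involutive ω) {ι : Type*} (s : Finset ι)
    (f : ι → R) : ω (∏ i ∈ s, involutionTrace ω (f i)) = ∏ i ∈ s, involutionTrace ω (f i) := by
  rw [map_prod]
  exact prod_congr rfl fun i _ ↦ map_involutionTrace hω (f i)

theorem involutionTrace_mul_of_map_eq {p : R} (hp : ω p = p) (r : R) :
    involutionTrace ω (r * p) = involutionTrace ω r * p := by
  simp [hp, add_mul]

theorem map_eq_of_mem_traceProducts (hω : Function.Involutive ω) {n : ℕ} {p : R}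
    (hp : p ∈ traceProducts ω n) : ω p = p := by
  obtain ⟨f, rfl⟩ := hp
  exact map_prod_involutionTrace hω univ f

theorem traceProducts_succ (hω : Function.Involutive ω) (n : ℕ) :
    traceProducts ω (n + 1) = involutionTrace ω '' ((Set.univ : Set R) • traceProducts ω n) := by
  ext z
  constructor
  · rintro ⟨f, rfl⟩
    have hp : ∏ i : Fin n, (f i.succ + ω (f i.succ)) ∈ traceProducts ω n := ⟨_, rfl⟩
    refine ⟨f 0 * _, Set.smul_mem_smul (Set.mem_univ _) hp, ?_⟩
    rw [involutionTrace_mul_of_map_eq (map_eq_of_mem_traceProducts hω hp), Fin.prod_univ_succ]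
    rfl
  · rintro ⟨_, ⟨r, -, _, ⟨g, rfl⟩, rfl⟩, rfl⟩
    refine ⟨Fin.cons r g, ?_⟩
    change involutionTrace ω (r * _) = _
    rw [involutionTrace_mul_of_map_eq (map_eq_of_mem_traceProducts hω ⟨g, rfl⟩),
      Fin.prod_univ_succ]
    simp

theorem closure_traceProducts_succ (hω : Function.Involutive ω) (n : ℕ) :
    AddSubmonoid.closure (traceProducts ω (n + 1)) =
      (Ideal.span (traceProducts ω n)).toAddSubmonoid.map (involutionTrace ω) := by
  rw [traceProducts_succ hω, ← AddMonoidHom.map_mclosure, ← Submodule.span_eq_closure]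

theorem involutionTrace_mem_map_iff (J : AddSubmonoid R) (x : R) :
    involutionTrace ω x ∈ J.map (involutionTrace ω) ↔
      ∃ s y : R, ω s = -s ∧ y ∈ J ∧ x = s + y := by
  constructor
  · rintro ⟨y, hy, hxy⟩
    refine ⟨x - y, y, ?_, hy, by ring⟩
    simp only [involutionTrace_apply] at hxy
    rw [map_sub]
    linear_combination -hxy
  · rintro ⟨s, y, hs, hy, rfl⟩
    refine ⟨y, hy, ?_⟩
    simp only [involutionTrace_apply, map_add, hs]
    ring

end InvolutionTrace

theorem preimage_of_I_pow_succ_general {R : Type*} [CommRing R] [Algebra (ZMod 2) R]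
    (ω : R →+* R) (hinv : ∀ x, ω (ω x) = x) (n : ℕ) (x : R) :
    (x + ω x) ∈ AddSubmonoid.closure
        {z : R | ∃ f : Fin (n + 1) → R, z = ∏ i, (f i + ω (f i))} ↔
      ∃ s y : R, ω s = s ∧
        y ∈ Ideal.span {z : R | ∃ f : Fin n → R, z = ∏ i, (f i + ω (f i))} ∧
        x = s + y := by
  change involutionTrace ω x ∈ AddSubmonoid.closure (traceProducts ω (n + 1)) ↔
    ∃ s y : R, ω s = s ∧ y ∈ Ideal.span (traceProducts ω n) ∧ x = s + y
  rw [closure_traceProducts_succ hinv, involutionTrace_mem_map_iff]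
  simp only [ZModModule.neg_eq_self, Submodule.mem_toAddSubmonoid]

/-- Let `R` be a commutative `𝔽₂`-algebra with involutive ring homomorphism `ω`,
`d x = x + ω x`, `S` the fixed subring and `I = d(R)`, an ideal of `S`.  For `n ≥ 1`,
the preimage of `I^(n+1)` (the `(n+1)`-st power of `I` within `S`, i.e. the set of
finite sums of products of `n+1` elements of `I`) under `d` equals `S + R·Iⁿ`,
where `R·Iⁿ` is the ideal of `R` generated by `Iⁿ`. -/
theorem preimage_of_I_pow_succ {R : Type*} [CommRing R] [Algebra (ZMod 2) R]
    (ω : R →+* R) (hinv : ∀ x, ω (ω x) = x) (n : ℕ) (hn : 1 ≤ n) (x : R) :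
    (x + ω x) ∈ AddSubmonoid.closure
        {z : R | ∃ f : Fin (n + 1) → R, z = ∏ i, (f i + ω (f i))} ↔
      ∃ s y : R, ω s = s ∧
        y ∈ Ideal.span {z : R | ∃ f : Fin n → R, z = ∏ i, (f i + ω (f i))} ∧
        x = s + y :=
  preimage_of_I_pow_succ_general ω hinv n x
end

section
/- In R = F_2[w₁, w₂, ...] with involution ω defined by Σ_{i=0}^{k} wᵢ·ω(w_{k-i}) = 0 for k ≥ 1, the following closed formula holds: ω(w_k) = Σ w_{i₁}⋯w_{i_p}, where the sum runs over all ordered sequences (i₁, ..., i_p) of positive integers with i₁ + ⋯ + i_p = k (i.e., over all compositions of k). -/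
open Finset

/-!
Splitting off the first block of a composition shows that `S n = ∑_c ∏ w_{c_j}` satisfies
`S (n + 1) = ∑_{i ≤ n} w_{i+1} S (n - i)`, which in characteristic 2 is the defining relation
`∑_{i ≤ k} wᵢ S (k - i) = 0` of `ω`. Since `w₀ = 1` these relations determine a sequence from its
value at `0`, and `S 0 = 1 = ω (w₀)`.
-/

/-- The variables `w₁, w₂, …` of `R = 𝔽₂[w₁, w₂, …]`, with the convention `w₀ = 1`. -/
noncomputable def w : ℕ → MvPolynomial ℕ (ZMod 2)
  | 0 => 1
  | k + 1 => MvPolynomial.X k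

namespace Composition

/-- A composition of `n + 1` is a first block `i + 1` followed by a composition of `n - i`. -/
def headTailEquiv (n : ℕ) : Composition (n + 1) ≃ Σ i : Fin (n + 1), Composition (n - i) where
  toFun
    | ⟨[], _, hsum⟩ => absurd hsum (by simp)
    | ⟨b :: bs, hpos, hsum⟩ =>
      have hb : 0 < b := hpos List.mem_cons_self
      have hsum : b + bs.sum = n + 1 := by simpa using hsum
      ⟨⟨b - 1, by omega⟩, ⟨bs, fun hi => hpos (List.mem_cons_of_mem b hi), by simp; omega⟩⟩
  invFun x :=
    ⟨((x.1 : ℕ) + 1) :: x.2.blocks,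
      by
        rintro i (_ | ⟨_, hi⟩)
        exacts [Nat.succ_pos _, x.2.blocks_pos hi],
      by have := x.2.blocks_sum; have := x.1.isLt; simp only [List.sum_cons]; omega⟩
  left_inv
    | ⟨[], _, hsum⟩ => absurd hsum (by simp)
    | ⟨b :: bs, hpos, hsum⟩ => by
      have hb : 0 < b := hpos List.mem_cons_self
      ext1
      simp only [Nat.sub_add_cancel hb]
  right_inv x := rfl

@[simp]
theorem blocks_headTailEquiv_symm {n : ℕ} (x : Σ i : Fin (n + 1), Composition (n - i)) :
    ((headTailEquiv n).symm x).blocks = ((x.1 : ℕ) + 1) :: x.2.blocks :=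
  rfl

end Composition

section CompositionSum

variable {R : Type*}

noncomputable def compositionSum [Semiring R] (a : ℕ → R) (n : ℕ) : R :=
  ∑ c : Composition n, (c.blocks.map a).prod

theorem compositionSum_zero [Semiring R] (a : ℕ → R) : compositionSum a 0 = 1 := by
  have hnil (c : Composition 0) : c.blocks = [] := c.blocks_eq_nil.2 rfl
  simp [compositionSum, hnil, composition_card]

theorem compositionSum_succ [Semiring R] (a : ℕ → R) (n : ℕ) :
    compositionSum a (n + 1) = ∑ i ∈ range (n + 1), a (i + 1) * compositionSum a (n - i) := by
  rw [compositionSum, ← (Composition.headTailEquiv n).symm.sum_comp, ← univ_sigma_univ,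
    sum_sigma, ← Fin.sum_univ_eq_sum_range (fun i => a (i + 1) * compositionSum a (n - i))]
  simp [compositionSum, mul_sum]

theorem sum_range_mul_compositionSum_eq_zero [Ring R] [CharP R 2] {a : ℕ → R} (ha : a 0 = 1)
    (k : ℕ) (hk : 1 ≤ k) : ∑ i ∈ range (k + 1), a i * compositionSum a (k - i) = 0 := by
  obtain ⟨n, rfl⟩ := Nat.exists_eq_add_of_le' hk
  rw [sum_range_succ']
  simp only [Nat.add_sub_add_right, Nat.sub_zero, ha, one_mul, compositionSum_succ]
  exact CharTwo.add_self_eq_zero _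

end CompositionSum

theorem eq_of_sum_range_mul_eq_zero {R : Type*} [Ring R] {a u v : ℕ → R} (ha : a 0 = 1)
    (h0 : u 0 = v 0) (hu : ∀ k, 1 ≤ k → ∑ i ∈ range (k + 1), a i * u (k - i) = 0)
    (hv : ∀ k, 1 ≤ k → ∑ i ∈ range (k + 1), a i * v (k - i) = 0) : u = v := by
  have hsucc (f : ℕ → R) (hf : ∀ k, 1 ≤ k → ∑ i ∈ range (k + 1), a i * f (k - i) = 0) (n : ℕ) :
      f (n + 1) = -∑ i ∈ range (n + 1), a (i + 1) * f (n - i) := by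
    have := hf (n + 1) (Nat.le_add_left 1 n)
    rw [sum_range_succ'] at this
    simp only [Nat.add_sub_add_right, Nat.sub_zero, ha, one_mul] at this
    exact eq_neg_of_add_eq_zero_right this
  funext k
  induction k using Nat.strong_induction_on with
  | _ k ih =>
    rcases k with _ | n
    · exact h0
    · rw [hsucc u hu, hsucc v hv]
      congr 1
      refine sum_congr rfl fun i _ => ?_
      rw [ih (n - i) (by omega)]

theorem omega_w_eq_sum_over_compositions_general
    (ω : MvPolynomial ℕ (ZMod 2) →+* MvPolynomial ℕ (ZMod 2))
    (hω : ∀ k : ℕ, 1 ≤ k → ∑ i ∈ Finset.range (k + 1), w i * ω (w (k - i)) = 0)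
    (k : ℕ) :
    ω (w k) = ∑ c : Composition k, (c.blocks.map w).prod := by
  have hw0 : w 0 = 1 := rfl
  have hω0 : ω (w 0) = compositionSum w 0 := by rw [hw0, map_one, compositionSum_zero]
  exact congrFun (eq_of_sum_range_mul_eq_zero (u := fun k => ω (w k)) hw0 hω0 hω
    (sum_range_mul_compositionSum_eq_zero hw0)) k

/-- Closed formula for the involution `ω` on `R = 𝔽₂[w₁, w₂, …]` defined by the
recursion `∑_{i=0}^{k} wᵢ · ω (w_{k-i}) = 0`: for `k ≥ 1`,
`ω (w_k) = ∑ w_{i₁} ⋯ w_{i_p}`, the sum running over all compositions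
`(i₁, …, i_p)` of `k` into positive integers. -/
theorem omega_w_eq_sum_over_compositions
    (ω : MvPolynomial ℕ (ZMod 2) →+* MvPolynomial ℕ (ZMod 2))
    (hω : ∀ k : ℕ, 1 ≤ k → ∑ i ∈ Finset.range (k + 1), w i * ω (w (k - i)) = 0)
    (k : ℕ) (hk : 1 ≤ k) :
    ω (w k) = ∑ c : Composition k, (c.blocks.map w).prod :=
  omega_w_eq_sum_over_compositions_general ω hω k
end

section
/- In R = F_2[w₁, w₂, ...] with involution ω as above, the involution ω is normal: for every homogeneous x ∈ R of strictly positive degree, the norm N(x) = x·ω(x) lies in the ideal I = {y + ω(y) : y ∈ R} of the fixed subring S. -/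
/-!
Write `N a = a * ω a` and `d y = y + ω y`. Once `ω` is known to be an involution,
`N (a + b) = N a + N b + d (a * ω b)` and `N (c * a) = N c * N a` with `N c` fixed by `ω`, so the
elements whose norm is a trace form an ideal. In the defining relation for `k = 2j` the terms
`i` and `2j - i` are exchanged by `ω`, so `N wⱼ` is a trace. Hence the ideal contains every `wⱼ`,
and with them every polynomial without constant term, such as a homogeneous one of positive degree.
-/

open Finset

section Involution

variable {A : Type*} [CommRing A]

/-- For `U = ∑ uᵢ tⁱ` the hypothesis says `U * σ U = 1`; applying `σ` gives `σ U * σ² U = 1`,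
so `σ² U = U` because `σ U` is a unit. -/
theorem apply_apply_eq_self_of_sum_mul_eq_zero (σ : A →+* A) (u : ℕ → A) (hu₀ : u 0 = 1)
    (hu : ∀ k, 1 ≤ k → ∑ i ∈ range (k + 1), u i * σ (u (k - i)) = 0) (k : ℕ) :
    σ (σ (u k)) = u k := by
  set U := PowerSeries.mk u
  set V := PowerSeries.mk (σ ∘ u)
  have hUV : U * V = 1 := by
    ext n
    rw [PowerSeries.coeff_mul, Nat.sum_antidiagonal_eq_sum_range_succ_mk]
    rcases Nat.eq_zero_or_pos n with rfl | hn
    · simp [U, V, hu₀]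
    · simpa [U, V, PowerSeries.coeff_one, hn.ne'] using hu n hn
  have hVσV : V * PowerSeries.mk (σ ∘ σ ∘ u) = 1 := by
    rw [← map_one (PowerSeries.map σ), ← hUV, map_mul]
    rfl
  have hVU : V * U = 1 := mul_comm U V ▸ hUV
  have hU : PowerSeries.mk (σ ∘ σ ∘ u) = U :=
    (IsUnit.of_mul_eq_one U hVU).mul_left_cancel (hVσV.trans hVU.symm)
  simpa [U] using congrArg (PowerSeries.coeff k) hU

variable {σ : A →+* A}

def normTraceIdeal (hσ : Function.Involutive σ) : Ideal A where
  carrier := {a | ∃ y, a * σ a = y + σ y}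
  zero_mem' := ⟨0, by simp⟩
  add_mem' := by
    rintro a b ⟨y, hy⟩ ⟨z, hz⟩
    refine ⟨y + z + a * σ b, ?_⟩
    simp only [map_add, map_mul, hσ b]
    linear_combination hy + hz
  smul_mem' := by
    rintro c a ⟨y, hy⟩
    refine ⟨c * σ c * y, ?_⟩
    simp only [smul_eq_mul, map_mul, hσ c]
    linear_combination c * σ c * hy

theorem mem_normTraceIdeal_of_sum_mul_eq_zero (hσ : Function.Involutive σ) (u : ℕ → A) (j : ℕ)
    (h : ∑ i ∈ range (2 * j + 1), u i * σ (u (2 * j - i)) = 0) : u j ∈ normTraceIdeal hσ := by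
  set S := ∑ i ∈ range j, u i * σ (u (2 * j - i))
  have hσS : σ S = ∑ t ∈ range j, u (j + (t + 1)) * σ (u (2 * j - (j + (t + 1)))) := by
    rw [map_sum, ← sum_range_reflect]
    refine sum_congr rfl fun t ht => ?_
    have ht : t < j := mem_range.mp ht
    rw [map_mul, hσ, mul_comm, show 2 * j - (j - 1 - t) = j + (t + 1) by omega,
      show 2 * j - (j + (t + 1)) = j - 1 - t by omega]
  refine ⟨-S, ?_⟩
  rw [show 2 * j + 1 = j + (j + 1) by omega, sum_range_add, sum_range_succ', ← hσS] at h
  simp only [add_zero, show 2 * j - j = j by omega] at h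
  rw [map_neg]
  linear_combination h

end Involution

namespace MvPolynomial

variable {ι R : Type*} [CommSemiring R]

theorem mem_ideal_span_X_of_constantCoeff_eq_zero {p : MvPolynomial ι R}
    (hp : constantCoeff p = 0) : p ∈ Ideal.span (Set.range X) := by
  rw [← Set.image_univ, mem_ideal_span_X_image]
  intro d hd
  have hd0 : d ≠ 0 := by rintro rfl; exact mem_support_iff.mp hd (by rwa [← constantCoeff_eq])
  simpa [Finsupp.ext_iff] using hd0

theorem IsWeightedHomogeneous.constantCoeff_eq_zero {M : Type*} [AddCommMonoid M]
    {wt : ι → M} {p : MvPolynomial ι R} {n : M} (hp : IsWeightedHomogeneous wt p n) (hn : n ≠ 0) :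
    constantCoeff p = 0 := by
  rw [constantCoeff_eq]
  exact hp.coeff_eq_zero 0 (by simpa using hn.symm)

end MvPolynomial

theorem involutive_of_sum_w_mul_eq_zero (ω : MvPolynomial ℕ (ZMod 2) →+* MvPolynomial ℕ (ZMod 2))
    (hω : ∀ k : ℕ, 1 ≤ k → ∑ i ∈ range (k + 1), w i * ω (w (k - i)) = 0) :
    Function.Involutive ω := by
  have hωω : ω.comp ω = RingHom.id _ :=
    MvPolynomial.ringHom_ext
      (RingHom.congr_fun (Subsingleton.elim ((ω.comp ω).comp MvPolynomial.C) MvPolynomial.C))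
      (fun n => apply_apply_eq_self_of_sum_mul_eq_zero ω w rfl hω (n + 1))
  exact RingHom.congr_fun hωω

/-- The involution `ω` on `R = 𝔽₂[w₁, w₂, …]` (defined by the recursion
`∑_{i=0}^{k} wᵢ · ω (w_{k-i}) = 0`) is normal: for every homogeneous `x` of strictly
positive degree (with respect to the grading `deg wᵢ = i`), the norm `N x = x · ω x`
lies in `I = {y + ω y : y ∈ R}`. -/
theorem omega_normal
    (ω : MvPolynomial ℕ (ZMod 2) →+* MvPolynomial ℕ (ZMod 2))
    (hω : ∀ k : ℕ, 1 ≤ k → ∑ i ∈ Finset.range (k + 1), w i * ω (w (k - i)) = 0)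
    (x : MvPolynomial ℕ (ZMod 2)) (m : ℕ) (hm : 0 < m)
    (hx : MvPolynomial.IsWeightedHomogeneous (fun n : ℕ => n + 1) x m) :
    ∃ y : MvPolynomial ℕ (ZMod 2), x * ω x = y + ω y := by
  have hinv := involutive_of_sum_w_mul_eq_zero ω hω
  have hX (n : ℕ) : MvPolynomial.X n ∈ normTraceIdeal hinv :=
    mem_normTraceIdeal_of_sum_mul_eq_zero hinv w (n + 1) (hω _ (by omega))
  exact Ideal.span_le.mpr (Set.range_subset_iff.mpr hX)
    (MvPolynomial.mem_ideal_span_X_of_constantCoeff_eq_zero (hx.constantCoeff_eq_zero hm.ne'))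
end

section
/- In R = F_2[w₁, w₂, ...] with involution ω as above, the ideal RI of R generated by I = {x + ω(x) : x ∈ R} equals the ideal Q(R) of R generated by squares of all elements of strictly positive degree (equivalently, generated by all wᵢ²). -/
open Finset

/-!
Put `W(t) = ∑ wᵢ tⁱ`; the recursion says `W · ω(W) = 1`, so the coefficients of
`W² = W · (W + ω W)` lie in `R·I`. In characteristic 2, `W² = ∑ wⱼ² t²ʲ`, which gives
`wⱼ² ∈ R·I`. Conversely, comparing coefficients of `W² = W · (W + ω W)` shows by induction
that `wₖ + ω wₖ ∈ Q(R)`, i.e. `ω` is the identity on the generators modulo `Q(R)`, hence on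
all of `R`. Finally squaring is additive in characteristic 2, so every `x` in the ideal
generated by the variables (in particular every homogeneous `x` of positive degree) has
`x² ∈ R·I`.
-/

open MvPolynomial

section SquareCoefficients

variable {A : Type*} [CommRing A]

/-- The coefficient of `t ^ k` in `(∑ wᵢ tⁱ) ^ 2`. -/
def sqCoeff (w : ℕ → A) (k : ℕ) : A :=
  ∑ i ∈ range (k + 1), w i * w (k - i)

theorem sqCoeff_eq_sum_filter [CharP A 2] (w : ℕ → A) (k : ℕ) :
    sqCoeff w k = ∑ i ∈ (range (k + 1)).filter (2 * · = k), w i * w (k - i) := by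
  -- off the diagonal, the terms for `i` and `k - i` cancel
  have off_diag : ∑ i ∈ (range (k + 1)).filter (¬ 2 * · = k), w i * w (k - i) = 0 := by
    refine sum_involution (fun i _ => k - i) (fun i hi => ?_) (fun i hi _ => ?_)
      (fun i hi => ?_) (fun i hi => ?_) <;> simp only [mem_filter, mem_range] at hi ⊢
    · rw [Nat.sub_sub_self (by omega), mul_comm]
      exact CharTwo.add_self_eq_zero _
    all_goals omega
  rw [sqCoeff, ← sum_filter_add_sum_filter_not _ (2 * · = k), off_diag, add_zero]

theorem sqCoeff_two_mul [CharP A 2] (w : ℕ → A) (j : ℕ) : sqCoeff w (2 * j) = w j ^ 2 := by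
  have diag : (range (2 * j + 1)).filter (2 * · = 2 * j) = {j} := by
    ext i
    simp only [mem_filter, mem_range, mem_singleton]
    omega
  rw [sqCoeff_eq_sum_filter, diag, sum_singleton, show 2 * j - j = j by omega, sq]

theorem sqCoeff_two_mul_add_one [CharP A 2] (w : ℕ → A) (j : ℕ) : sqCoeff w (2 * j + 1) = 0 := by
  have diag : (range (2 * j + 1 + 1)).filter (2 * · = 2 * j + 1) = ∅ := by
    ext i
    simp only [mem_filter, mem_range, notMem_empty, iff_false]
    omega
  rw [sqCoeff_eq_sum_filter, diag, sum_empty]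

theorem sqCoeff_eq_sum_mul_add_map (ω : A → A) (w : ℕ → A) (k : ℕ)
    (hω : ∑ i ∈ range (k + 1), w i * ω (w (k - i)) = 0) :
    sqCoeff w k = ∑ i ∈ range (k + 1), w i * (w (k - i) + ω (w (k - i))) := by
  simp only [sqCoeff, mul_add, sum_add_distrib, hω, add_zero]

theorem sq_mem_span_add_map [CharP A 2] (ω : A → A) (w : ℕ → A) (j : ℕ)
    (hω : ∑ i ∈ range (2 * j + 1), w i * ω (w (2 * j - i)) = 0) :
    w j ^ 2 ∈ Ideal.span (Set.range fun y => y + ω y) := by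
  rw [← sqCoeff_two_mul, sqCoeff_eq_sum_mul_add_map ω w _ hω]
  exact Ideal.sum_mem _ fun i _ => Ideal.mul_mem_left _ _ (Ideal.subset_span ⟨_, rfl⟩)

theorem add_map_mem_of_sqCoeff_mem [CharP A 2] (ω : A →+* A) (w : ℕ → A) (hw₀ : w 0 = 1)
    (hω : ∀ k, 1 ≤ k → ∑ i ∈ range (k + 1), w i * ω (w (k - i)) = 0) (J : Ideal A)
    (hJ : ∀ k, 1 ≤ k → sqCoeff w k ∈ J) (k : ℕ) : w k + ω (w k) ∈ J := by
  induction k using Nat.strong_induction_on with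
  | _ k ih =>
    rcases k with _ | n
    · rw [hw₀, map_one, CharTwo.add_self_eq_zero]
      exact J.zero_mem
    · have h := sqCoeff_eq_sum_mul_add_map ω w (n + 1) (hω _ n.succ_pos)
      rw [sum_range_succ', hw₀, one_mul, Nat.sub_zero] at h
      rw [eq_sub_of_add_eq' h.symm]
      refine J.sub_mem (hJ _ n.succ_pos) (J.sum_mem fun i hi => J.mul_mem_left _ (ih _ ?_))
      simp only [mem_range] at hi
      omega

end SquareCoefficients

theorem pow_mem_of_mem_span {B : Type*} [CommRing B] {p : ℕ} [ExpChar B p] {s : Set B}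
    {J : Ideal B} (hs : ∀ y ∈ s, y ^ p ∈ J) {x : B} (hx : x ∈ Ideal.span s) : x ^ p ∈ J := by
  have h : Ideal.span s ≤ J.comap (frobenius B p) :=
    Ideal.span_le.mpr fun y hy => by simpa [frobenius_def] using hs y hy
  simpa [frobenius_def] using h hx

namespace MvPolynomial

theorem IsWeightedHomogeneous.mem_idealOfVars {σ R M : Type*} [CommSemiring R]
    [AddCommMonoid M] {ν : σ → M} {φ : MvPolynomial σ R} {m : M}
    (hφ : IsWeightedHomogeneous ν φ m) (hm : m ≠ 0) : φ ∈ idealOfVars σ R := by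
  rw [← pow_one (idealOfVars σ R), mem_pow_idealOfVars_iff']
  intro d hd
  obtain rfl : d = 0 := (Finsupp.degree_eq_zero_iff d).mp (by omega)
  exact hφ.coeff_eq_zero 0 (by simpa using hm.symm)

theorem ringHom_ext_zmod {σ B : Type*} [Semiring B] {n : ℕ} {f g : MvPolynomial σ (ZMod n) →+* B}
    (hX : ∀ i, f (X i) = g (X i)) : f = g :=
  ringHom_ext (fun r => RingHom.congr_fun (RingHom.ext_zmod (f.comp C) (g.comp C)) r) hX

theorem sub_map_mem_of_forall_X {σ : Type*} {n : ℕ}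
    (ω : MvPolynomial σ (ZMod n) →+* MvPolynomial σ (ZMod n)) (J : Ideal (MvPolynomial σ (ZMod n)))
    (hX : ∀ i, X i - ω (X i) ∈ J) (y : MvPolynomial σ (ZMod n)) : y - ω y ∈ J := by
  have h : Ideal.Quotient.mk J = (Ideal.Quotient.mk J).comp ω :=
    ringHom_ext_zmod fun i => Ideal.Quotient.eq.mpr (hX i)
  exact Ideal.Quotient.eq.mp (RingHom.congr_fun h y)

end MvPolynomial

/-- In `R = 𝔽₂[w₁, w₂, …]` with the involution `ω` defined by the recursion
`∑_{i=0}^{k} wᵢ · ω (w_{k-i}) = 0`, the ideal `R·I` generated by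
`I = {y + ω y : y ∈ R}` equals the ideal of squares `Q(R)`, generated by the squares
of all homogeneous elements of strictly positive degree. -/
theorem RI_eq_ideal_of_squares
    (ω : MvPolynomial ℕ (ZMod 2) →+* MvPolynomial ℕ (ZMod 2))
    (hω : ∀ k : ℕ, 1 ≤ k → ∑ i ∈ Finset.range (k + 1), w i * ω (w (k - i)) = 0) :
    Ideal.span (Set.range fun y : MvPolynomial ℕ (ZMod 2) => y + ω y) =
      Ideal.span {z : MvPolynomial ℕ (ZMod 2) |
        ∃ (x : MvPolynomial ℕ (ZMod 2)) (m : ℕ), 0 < m ∧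
          MvPolynomial.IsWeightedHomogeneous (fun n : ℕ => n + 1) x m ∧ z = x ^ 2} := by
  set Q := Ideal.span {z : MvPolynomial ℕ (ZMod 2) |
    ∃ (x : MvPolynomial ℕ (ZMod 2)) (m : ℕ), 0 < m ∧
      MvPolynomial.IsWeightedHomogeneous (fun n : ℕ => n + 1) x m ∧ z = x ^ 2}
  have sqCoeff_mem : ∀ k, 1 ≤ k → sqCoeff w k ∈ Q := by
    intro k hk
    obtain ⟨j, rfl | rfl⟩ := Nat.even_or_odd' k
    · obtain ⟨i, rfl⟩ : ∃ i, j = i + 1 := ⟨j - 1, by omega⟩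
      rw [sqCoeff_two_mul]
      exact Ideal.subset_span ⟨X i, i + 1, i.succ_pos, isWeightedHomogeneous_X _ _ i, rfl⟩
    · rw [sqCoeff_two_mul_add_one]
      exact Q.zero_mem
  apply le_antisymm
  · refine Ideal.span_le.mpr ?_
    rintro _ ⟨y, rfl⟩
    have hX : ∀ i, X i - ω (X i) ∈ Q := fun i => by
      rw [CharTwo.sub_eq_add]
      exact add_map_mem_of_sqCoeff_mem ω w rfl hω Q sqCoeff_mem (i + 1)
    simpa only [SetLike.mem_coe, CharTwo.sub_eq_add] using sub_map_mem_of_forall_X ω Q hX y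
  · refine Ideal.span_le.mpr ?_
    rintro _ ⟨x, m, hm, hx, rfl⟩
    refine pow_mem_of_mem_span ?_ (hx.mem_idealOfVars hm.ne')
    rintro _ ⟨i, rfl⟩
    exact sq_mem_span_add_map ω w (i + 1) (hω _ (by omega))
end

section
/- In R = F_2[w₁, w₂, ...] with involution ω as above, for every i ≥ 1 the following identity holds: d(w_{2i}) = wᵢ² + Σ_{k=1}^{i-1} ω(w_{2(i-k)})·w_k², where d(x) = x + ω(x). -/
open Finset

/-!
With `W = ∑ wₙ tⁿ`, the defining recursion of `ω` says `W · ω(W) = 1`, hence `W = W² · ω(W)`.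
In characteristic 2 squaring is additive, so `W² = ∑ wₖ² t²ᵏ`, and comparing coefficients of
`t²ⁱ` gives `w₂ᵢ = ∑_{k=0}^{i} wₖ² ω(w_{2(i-k)})`. The terms `k = 0` and `k = i` are `ω(w₂ᵢ)` and `wᵢ²`.
-/

namespace PowerSeries

variable {R : Type*} [CommRing R]

theorem coeff_mul_expand_mul (p : ℕ) (hp : p ≠ 0) (f g : PowerSeries R) (n : ℕ) :
    coeff (p * n) (expand p hp f * g) =
      ∑ x ∈ antidiagonal n, coeff x.1 f * coeff (p * x.2) g := by
  have hp' : 0 < p := Nat.pos_of_ne_zero hp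
  have exists_mul_of_mem : ∀ x ∈ (antidiagonal (p * n)).filter (p ∣ ·.1),
      ∃ a c, a + c = n ∧ x = (p * a, p * c) := by
    rintro ⟨_, b⟩ hx
    obtain ⟨hab, a, rfl⟩ := mem_filter.mp hx
    rw [HasAntidiagonal.mem_antidiagonal] at hab
    obtain ⟨c, rfl⟩ : p ∣ b :=
      (Nat.dvd_add_right (dvd_mul_right p a)).mp (hab ▸ dvd_mul_right p n)
    exact ⟨a, c, Nat.eq_of_mul_eq_mul_left hp' (by rw [mul_add, hab]), rfl⟩
  rw [coeff_mul, ← sum_filter_of_ne (p := (p ∣ ·.1))]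
  · symm
    refine sum_nbij' (fun x => (p * x.1, p * x.2)) (fun x => (x.1 / p, x.2 / p)) ?_ ?_ ?_ ?_ ?_
    · rintro ⟨a, c⟩ h
      simp only [mem_filter, HasAntidiagonal.mem_antidiagonal] at h ⊢
      exact ⟨by rw [← mul_add, h], dvd_mul_right p a⟩
    · intro x hx
      obtain ⟨a, c, hac, rfl⟩ := exists_mul_of_mem x hx
      simpa [Nat.mul_div_cancel_left _ hp'] using hac
    · rintro ⟨a, c⟩ -
      simp [Nat.mul_div_cancel_left _ hp']
    · intro x hx
      obtain ⟨a, c, -, rfl⟩ := exists_mul_of_mem x hx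
      simp [Nat.mul_div_cancel_left _ hp']
    · intro x _
      rw [coeff_expand_mul]
  · intro x _ hx
    contrapose! hx
    rw [coeff_expand_of_not_dvd p hp f hx, zero_mul]

theorem map_frobenius_mk (p : ℕ) [ExpChar R p] (f : ℕ → R) :
    map (frobenius R p) (mk f) = mk fun k => f k ^ p := by
  ext k
  simp [frobenius_def]

theorem pow_char_eq_expand_map_frobenius (p : ℕ) [ExpChar R p] (hp : p ≠ 0) (f : PowerSeries R) :
    f ^ p = expand p hp (map (frobenius R p) f) := by
  rw [← map_expand]
  exact (MvPowerSeries.map_frobenius_expand p hp).symm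

end PowerSeries

open PowerSeries

/-- In `R = 𝔽₂[w₁, w₂, …]` with the involution `ω` defined by the recursion
`∑_{j=0}^{k} w_j · ω (w_{k-j}) = 0` and `d x = x + ω x`, for every `i ≥ 1`:
`d (w_{2i}) = wᵢ² + ∑_{k=1}^{i-1} ω (w_{2(i-k)}) · w_k²`. -/
theorem d_w_two_i
    (ω : MvPolynomial ℕ (ZMod 2) →+* MvPolynomial ℕ (ZMod 2))
    (hω : ∀ k : ℕ, 1 ≤ k → ∑ j ∈ Finset.range (k + 1), w j * ω (w (k - j)) = 0)
    (i : ℕ) (hi : 1 ≤ i) :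
    w (2 * i) + ω (w (2 * i)) =
      w i ^ 2 + ∑ k ∈ Finset.Ico 1 i, ω (w (2 * (i - k))) * w k ^ 2 := by
  set W := mk w
  set ωW := mk fun n => ω (w n)
  have hinv : W * ωW = 1 := by
    refine PowerSeries.ext fun n => ?_
    rw [coeff_mul, Nat.sum_antidiagonal_eq_sum_range_succ_mk, coeff_one]
    rcases Nat.eq_zero_or_pos n with rfl | hn
    · simp [W, ωW, w]
    · simpa [W, ωW, Nat.pos_iff_ne_zero.mp hn] using hω n hn
  have hW : W = expand 2 two_ne_zero (mk fun k => w k ^ 2) * ωW := by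
    rw [← map_frobenius_mk, ← pow_char_eq_expand_map_frobenius, sq, mul_assoc, hinv, mul_one]
  have hcoeff : w (2 * i) = ∑ k ∈ range (i + 1), w k ^ 2 * ω (w (2 * (i - k))) := by
    simpa [W, ωW, coeff_mul_expand_mul, Nat.sum_antidiagonal_eq_sum_range_succ_mk]
      using congrArg (coeff (2 * i)) hW
  rw [sum_range_succ, range_eq_Ico, sum_eq_sum_Ico_succ_bot hi] at hcoeff
  simp only [show w 0 = 1 from rfl, one_pow, one_mul, Nat.sub_zero, Nat.sub_self, mul_zero,
    map_one, mul_one, zero_add] at hcoeff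
  simp_rw [mul_comm (ω _)]
  linear_combination hcoeff + CharTwo.add_self_eq_zero (ω (w (2 * i)))
end

section
/- In R = F_2[w₁, w₂, ...] with involution ω and power sums p_k as above, for every odd k ≥ 1: p_k² = Σ_{i=0}^{(k-1)/2} [ d(w_{2i}·w_{2(k-i)}) + d(w_{2i})·d(w_{2(k-i)}) ], where d(x) = x + ω(x) and w₀ = 1. -/
/-! With `W = ∑ wₙ tⁿ`, `Ω = ∑ ω(wₙ) tⁿ` and `P = ∑_{n ≥ 1} pₙ tⁿ`, the hypotheses say `W Ω = 1`
and `P W = t W'` (Newton). Hence `P = t W' Ω`, and differentiating `W Ω = 1` gives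
`W' Ω = -W Ω'`, so `P² = -(t W')(t Ω')`. In characteristic 2, `t f'` is the odd part of `f` and
`p_k²` is the coefficient of `t^{2k}` in `P²`; since the even part of `W Ω` is `1`, the odd·odd and
even·even contributions to `t^{2k}` agree, so `p_k² = ∑_{i+j=k} w_{2i} ω(w_{2j})`. For odd `k`,
pair `i` with `k - i` and use `d(ab) + d(a) d(b) = a ω(b) + b ω(a)`. -/

open Finset

lemma Finset.Nat.sum_antidiagonal_two_mul_add_one {M : Type*} [AddCommMonoid M]
    (f : ℕ → ℕ → M) (s : ℕ) :
    ∑ x ∈ antidiagonal (2 * s + 1), f x.1 x.2 =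
      ∑ i ∈ range (s + 1), (f i (2 * s + 1 - i) + f (2 * s + 1 - i) i) := by
  rw [Nat.sum_antidiagonal_eq_sum_range_succ f, show (2 * s + 1).succ = (s + 1) + (s + 1) by omega,
    sum_range_add, ← sum_range_reflect (fun j => f (s + 1 + j) (2 * s + 1 - (s + 1 + j))),
    ← sum_add_distrib]
  refine sum_congr rfl fun i hi => ?_
  rw [mem_range] at hi
  congr 2 <;> omega

open PowerSeries

namespace PowerSeries

variable {R : Type*} [CommRing R]

noncomputable def evenPart (f : R⟦X⟧) : R⟦X⟧ := mk fun n => if Even n then coeff n f else 0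

noncomputable def oddPart (f : R⟦X⟧) : R⟦X⟧ := mk fun n => if Even n then 0 else coeff n f

@[simp]
lemma coeff_evenPart (f : R⟦X⟧) (n : ℕ) :
    coeff n (evenPart f) = if Even n then coeff n f else 0 := coeff_mk _ _

@[simp]
lemma coeff_oddPart (f : R⟦X⟧) (n : ℕ) :
    coeff n (oddPart f) = if Even n then 0 else coeff n f := coeff_mk _ _

lemma evenPart_eq_expand (f : R⟦X⟧) :
    evenPart f = expand 2 two_ne_zero (mk fun n => coeff (2 * n) f) := by
  ext n
  rw [coeff_evenPart, coeff_expand, coeff_mk]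
  simp only [even_iff_two_dvd]
  split_ifs with h
  · rw [Nat.mul_div_cancel' h]
  · rfl

lemma coeff_two_mul_evenPart_mul_evenPart (f g : R⟦X⟧) (n : ℕ) :
    coeff (2 * n) (evenPart f * evenPart g) =
      ∑ x ∈ antidiagonal n, coeff (2 * x.1) f * coeff (2 * x.2) g := by
  rw [evenPart_eq_expand, evenPart_eq_expand, ← map_mul, coeff_expand_mul, coeff_mul]
  simp only [coeff_mk]

lemma coeff_evenPart_mul_add_coeff_oddPart_mul {n : ℕ} (hn : Even n) (f g : R⟦X⟧) :
    coeff n (evenPart f * evenPart g) + coeff n (oddPart f * oddPart g) = coeff n (f * g) := by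
  simp only [coeff_mul, ← sum_add_distrib]
  refine sum_congr rfl fun ⟨i, j⟩ hij => ?_
  have hj : Even j ↔ Even i := by
    rw [HasAntidiagonal.mem_antidiagonal] at hij
    subst hij
    rw [Nat.even_add] at hn
    exact hn.symm
  by_cases hi : Even i <;> simp [hi, hj]

lemma coeff_X_mul_derivative (f : R⟦X⟧) (n : ℕ) :
    coeff n (X * d⁄dX R f) = n * coeff n f := by
  cases n with
  | zero => simp
  | succ n => rw [coeff_succ_X_mul, coeff_derivative, mul_comm]; push_cast; rfl

lemma mk_mul_mk_eq_one {a b : ℕ → R} (h₀ : a 0 * b 0 = 1)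
    (h : ∀ k : ℕ, 1 ≤ k → ∑ i ∈ range (k + 1), a i * b (k - i) = 0) : mk a * mk b = 1 := by
  ext n
  rw [coeff_mul, Nat.sum_antidiagonal_eq_sum_range_succ_mk, coeff_one]
  simp only [coeff_mk]
  cases n with
  | zero => simpa using h₀
  | succ n => simpa using h (n + 1) n.succ_pos

lemma mul_mk_eq_X_mul_derivative {a p : ℕ → R}
    (h : ∀ k : ℕ, 1 ≤ k → (k : R) * a k = ∑ j ∈ range k, p (k - j) * a j) :
    mk (fun n => if n = 0 then 0 else p n) * mk a = X * d⁄dX R (mk a) := by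
  ext n
  rw [mul_comm, coeff_mul, Nat.sum_antidiagonal_eq_sum_range_succ_mk, coeff_X_mul_derivative,
    sum_range_succ]
  cases n with
  | zero => simp
  | succ n =>
    rw [coeff_mk, h (n + 1) n.succ_pos]
    simp only [coeff_mk, Nat.sub_self, if_pos, mul_zero, add_zero]
    refine sum_congr rfl fun j hj => ?_
    rw [if_neg (by simp at hj; omega), mul_comm]

lemma sq_X_mul_derivative_mul_of_mul_eq_one {f g : R⟦X⟧} (h : f * g = 1) :
    (X * d⁄dX R f * g) ^ 2 = -((X * d⁄dX R f) * (X * d⁄dX R g)) := by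
  have hd : f * d⁄dX R g + g * d⁄dX R f = 0 := by
    simpa only [smul_eq_mul, h, derivative_one] using ((d⁄dX R).leibniz f g).symm
  linear_combination (X ^ 2 * d⁄dX R f * g) * hd - (X ^ 2 * d⁄dX R f * d⁄dX R g) * h

instance charP (p : ℕ) [CharP R p] : CharP R⟦X⟧ p :=
  charP_of_injective_algebraMap C_injective p

section CharTwo

variable [CharP R 2]

lemma coeff_two_mul_sq (f : R⟦X⟧) (n : ℕ) : coeff (2 * n) (f ^ 2) = coeff n f ^ 2 := by
  rw [← MvPowerSeries.map_frobenius_expand 2 two_ne_zero]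
  exact congrArg (frobenius R 2) (coeff_expand_mul 2 two_ne_zero f n)

lemma X_mul_derivative_eq_oddPart (f : R⟦X⟧) : X * d⁄dX R f = oddPart f := by
  ext n
  rw [coeff_X_mul_derivative, coeff_oddPart]
  rcases Nat.even_or_odd n with ⟨m, rfl⟩ | ⟨m, rfl⟩
  · simp [← two_mul, CharTwo.two_eq_zero]
  · simp [CharTwo.two_eq_zero]

theorem sq_coeff_eq_sum_antidiagonal_of_mul_eq_X_mul_derivative {P f g : R⟦X⟧} (hfg : f * g = 1)
    (hP : P * f = X * d⁄dX R f) {k : ℕ} (hk : k ≠ 0) :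
    coeff k P ^ 2 = ∑ x ∈ antidiagonal k, coeff (2 * x.1) f * coeff (2 * x.2) g := by
  have hP' : P = X * d⁄dX R f * g := by rw [← hP, mul_assoc, hfg, mul_one]
  have hsq : P ^ 2 = oddPart f * oddPart g := by
    rw [hP', sq_X_mul_derivative_mul_of_mul_eq_one hfg, CharTwo.neg_eq,
      X_mul_derivative_eq_oddPart, X_mul_derivative_eq_oddPart]
  have hparts := coeff_evenPart_mul_add_coeff_oddPart_mul (even_two_mul k) f g
  rw [hfg, coeff_one, if_neg (by omega), CharTwo.add_eq_zero] at hparts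
  rw [← coeff_two_mul_sq, hsq, ← hparts, coeff_two_mul_evenPart_mul_evenPart]

end CharTwo

end PowerSeries

/-- In `R = 𝔽₂[w₁, w₂, …]` with the involution `ω` given by
`∑_{i=0}^{k} wᵢ · ω (w_{k-i}) = 0`, `d x = x + ω x`, and the power sums `p_k` given by
the Newton identities: for every odd `k ≥ 1`,
`p_k² = ∑_{i=0}^{(k-1)/2} [ d (w_{2i} · w_{2(k-i)}) + d (w_{2i}) · d (w_{2(k-i)}) ]`. -/
theorem p_sq_formula
    (ω : MvPolynomial ℕ (ZMod 2) →+* MvPolynomial ℕ (ZMod 2))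
    (hω : ∀ k : ℕ, 1 ≤ k → ∑ i ∈ Finset.range (k + 1), w i * ω (w (k - i)) = 0)
    (p : ℕ → MvPolynomial ℕ (ZMod 2))
    (hp : ∀ k : ℕ, 1 ≤ k →
      (k : MvPolynomial ℕ (ZMod 2)) * w k = ∑ j ∈ Finset.range k, p (k - j) * w j)
    (k : ℕ) (hk : Odd k) :
    p k ^ 2 =
      ∑ i ∈ Finset.range ((k - 1) / 2 + 1),
        ((w (2 * i) * w (2 * (k - i)) + ω (w (2 * i) * w (2 * (k - i)))) +
          (w (2 * i) + ω (w (2 * i))) * (w (2 * (k - i)) + ω (w (2 * (k - i))))) := by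
  obtain ⟨s, rfl⟩ := hk
  have hinv : mk w * mk (fun n => ω (w n)) = 1 := mk_mul_mk_eq_one (by simp [w]) hω
  have hpk : p (2 * s + 1) = coeff (2 * s + 1) (mk fun n => if n = 0 then 0 else p n) := by simp
  have hd (a b : MvPolynomial ℕ (ZMod 2)) :
      (a * b + ω (a * b)) + (a + ω a) * (b + ω b) = a * ω b + b * ω a := by
    rw [map_mul]
    linear_combination (a * b + ω a * ω b) * CharTwo.two_eq_zero (R := MvPolynomial ℕ (ZMod 2))
  rw [hpk, sq_coeff_eq_sum_antidiagonal_of_mul_eq_X_mul_derivative hinv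
      (mul_mk_eq_X_mul_derivative hp) (by omega),
    Nat.sum_antidiagonal_two_mul_add_one
      (fun i j => coeff (2 * i) (mk w) * coeff (2 * j) (mk fun n => ω (w n))),
    show (2 * s + 1 - 1) / 2 = s by omega]
  refine sum_congr rfl fun i _ => ?_
  simp only [coeff_mk, hd]
end

section
/- Let V be a finite-dimensional vector space over F_2 of dimension n, and let e ∈ Λⁿ(V) be the nonzero top exterior form. Then every nonzero element x of the exterior algebra Λ(V) divides e: there exists y ∈ Λ(V) with x ∧ y = e. -/
/-!
In characteristic 2 the exterior algebra is commutative (signs disappear), and for a spanning family `(bᵢ)` it is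
spanned by the monomials `e_S = ∏_{i ∈ S} ι bᵢ`, with `e_S e_T = e_{S ∪ T}` for disjoint `S, T`
and `e_S e_T = 0` otherwise. Write `x = ∑ c_S e_S ≠ 0` and pick `S` of minimal size with
`c_S ≠ 0`. Every other monomial of `x` with a nonzero coefficient meets `Sᶜ`, so
`x e_{Sᶜ} = c_S e_univ`. Finally, the top exterior power is spanned by `e_univ`.
-/

open Finset

namespace ExteriorAlgebra

variable {R K V κ : Type*} [AddCommGroup V]

section CommRing

variable [CommRing R] [CharP R 2] [Module R V]

theorem commute_ι_of_charTwo (x y : V) : Commute (ι R x) (ι R y) := by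
  rw [Commute, SemiconjBy, eq_neg_of_add_eq_zero_left (ι_add_mul_swap x y), ← neg_one_smul R,
    CharTwo.neg_eq, one_smul]

variable (R) in
def wedgeMonomial (b : κ → V) (S : Finset κ) : ExteriorAlgebra R V :=
  S.noncommProd (fun i => ι R (b i))
    (Pairwise.set_pairwise (fun i j _ => commute_ι_of_charTwo (b i) (b j)) _)

variable {b : κ → V}

@[simp]
theorem wedgeMonomial_empty : wedgeMonomial R b ∅ = 1 :=
  noncommProd_empty _ _

@[simp]
theorem wedgeMonomial_singleton (i : κ) : wedgeMonomial R b {i} = ι R (b i) :=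
  noncommProd_singleton _ _

theorem wedgeMonomial_mul_of_disjoint [DecidableEq κ] {S T : Finset κ} (h : Disjoint S T) :
    wedgeMonomial R b S * wedgeMonomial R b T = wedgeMonomial R b (S ∪ T) :=
  (noncommProd_union_of_disjoint h _ _).symm

theorem wedgeMonomial_mul_of_not_disjoint {S T : Finset κ} (h : ¬Disjoint S T) :
    wedgeMonomial R b S * wedgeMonomial R b T = 0 := by
  classical
  obtain ⟨i, hiS, hiT⟩ := not_disjoint_iff.mp h
  rw [wedgeMonomial, wedgeMonomial, ← noncommProd_erase_mul S hiS,
    ← mul_noncommProd_erase T hiT, mul_assoc, ← mul_assoc (ι R (b i)), ι_sq_zero, zero_mul,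
    mul_zero]

theorem span_wedgeMonomial_mul_span_le (k l : ℕ) :
    Submodule.span R (wedgeMonomial R b '' {S | #S = k}) *
        Submodule.span R (wedgeMonomial R b '' {T | #T = l}) ≤
      Submodule.span R (wedgeMonomial R b '' {U | #U = k + l}) := by
  classical
  rw [Submodule.span_mul_span, Submodule.span_le]
  rintro _ ⟨_, ⟨S, hS, rfl⟩, _, ⟨T, hT, rfl⟩, rfl⟩
  dsimp only
  by_cases hST : Disjoint S T
  · rw [wedgeMonomial_mul_of_disjoint hST]
    exact Submodule.subset_span ⟨S ∪ T, by simp_all [card_union_of_disjoint hST], rfl⟩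
  · rw [wedgeMonomial_mul_of_not_disjoint hST]
    exact zero_mem _

theorem range_ι_le_span_wedgeMonomial (hb : Submodule.span R (Set.range b) = ⊤) :
    LinearMap.range (ι R) ≤ Submodule.span R (wedgeMonomial R b '' {S | #S = 1}) := by
  rw [LinearMap.range_eq_map, ← hb, Submodule.map_span]
  refine Submodule.span_mono ?_
  rintro _ ⟨_, ⟨i, rfl⟩, rfl⟩
  exact ⟨{i}, card_singleton i, wedgeMonomial_singleton i⟩

theorem exteriorPower_le_span_wedgeMonomial (hb : Submodule.span R (Set.range b) = ⊤) (k : ℕ) :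
    ⋀[R]^k V ≤ Submodule.span R (wedgeMonomial R b '' {S | #S = k}) := by
  induction k with
  | zero =>
    rw [exteriorPower, pow_zero, Submodule.one_eq_span, Submodule.span_le,
      Set.singleton_subset_iff]
    exact Submodule.subset_span ⟨∅, card_empty, wedgeMonomial_empty⟩
  | succ k ih =>
    rw [exteriorPower, pow_succ]
    exact (mul_le_mul' ih (range_ι_le_span_wedgeMonomial hb)).trans
      (span_wedgeMonomial_mul_span_le k 1)

theorem span_range_wedgeMonomial (hb : Submodule.span R (Set.range b) = ⊤) :
    Submodule.span R (Set.range (wedgeMonomial R b)) = ⊤ := by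
  rw [Submodule.eq_top_iff']
  intro x
  induction x using DirectSum.Decomposition.inductionOn fun k => ⋀[R]^k V with
  | zero => exact zero_mem _
  | add _ _ hx hy => exact add_mem hx hy
  | @homogeneous k x =>
    exact Submodule.span_mono (Set.image_subset_range _ _)
      (exteriorPower_le_span_wedgeMonomial hb k x.2)

theorem exists_eq_smul_wedgeMonomial_univ [Fintype κ] (hb : Submodule.span R (Set.range b) = ⊤)
    {e : ExteriorAlgebra R V} (he : e ∈ ⋀[R]^(Fintype.card κ) V) :
    ∃ c : R, e = c • wedgeMonomial R b univ := by
  have hspan := exteriorPower_le_span_wedgeMonomial hb _ he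
  rw [show {S : Finset κ | #S = Fintype.card κ} = {univ} by ext; simp [card_eq_iff_eq_univ],
    Set.image_singleton, Submodule.mem_span_singleton] at hspan
  exact hspan.imp fun _ hc => hc.symm

end CommRing

variable [Field K] [CharP K 2] [Module K V] [Fintype κ] {b : κ → V}

theorem exists_mul_eq_wedgeMonomial_univ (hb : Submodule.span K (Set.range b) = ⊤)
    {x : ExteriorAlgebra K V} (hx : x ≠ 0) : ∃ y, x * y = wedgeMonomial K b univ := by
  classical
  obtain ⟨c, rfl⟩ := (Submodule.mem_span_range_iff_exists_fun K).mp
    (span_range_wedgeMonomial hb ▸ Submodule.mem_top : x ∈ _)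
  have hsupp : (univ.filter fun S => c S ≠ 0).Nonempty := by
    by_contra! h
    simp_all [filter_eq_empty_iff]
  obtain ⟨S, hS, hmin⟩ := exists_min_image _ card hsupp
  refine ⟨(c S)⁻¹ • wedgeMonomial K b Sᶜ, ?_⟩
  rw [mul_smul_comm, sum_mul, sum_eq_single S]
  · rw [smul_mul_assoc, wedgeMonomial_mul_of_disjoint disjoint_compl_right, union_compl,
      smul_smul, inv_mul_cancel₀ (mem_filter.mp hS).2, one_smul]
  · intro T _ hTS
    by_cases hT : c T = 0
    · rw [hT, zero_smul, zero_mul]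
    -- `T ⊆ S` would force `T = S` by minimality of `#S`
    have hTS' : ¬T ⊆ S := fun h =>
      hTS (eq_of_subset_of_card_le h (hmin T (mem_filter.mpr ⟨mem_univ T, hT⟩)))
    rw [smul_mul_assoc, wedgeMonomial_mul_of_not_disjoint
      (mt disjoint_compl_right_iff.mp hTS'), smul_zero]
  · exact fun h => (h (mem_univ S)).elim

end ExteriorAlgebra

open ExteriorAlgebra in
theorem all_divide_top_form_general (V : Type*) [AddCommGroup V] [Module (ZMod 2) V]
    [FiniteDimensional (ZMod 2) V] (n : ℕ) (hn : Module.finrank (ZMod 2) V = n)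
    (e : ExteriorAlgebra (ZMod 2) V) (he : e ∈ ⋀[ZMod 2]^n V)
    (x : ExteriorAlgebra (ZMod 2) V) (hx : x ≠ 0) :
    ∃ y : ExteriorAlgebra (ZMod 2) V, x * y = e := by
  let b := Module.finBasisOfFinrankEq (ZMod 2) V hn
  rw [← Fintype.card_fin n] at he
  obtain ⟨c, rfl⟩ := exists_eq_smul_wedgeMonomial_univ b.span_eq he
  obtain ⟨y, hy⟩ := exists_mul_eq_wedgeMonomial_univ b.span_eq hx
  exact ⟨c • y, by rw [mul_smul_comm, hy]⟩

/-- Let `V` be an `n`-dimensional vector space over `𝔽₂` and `e ∈ Λⁿ(V)` the nonzero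
top exterior form.  Then every nonzero `x` in the exterior algebra `Λ(V)` divides `e`:
there exists `y` with `x * y = e`. -/
theorem all_divide_top_form (V : Type*) [AddCommGroup V] [Module (ZMod 2) V]
    [FiniteDimensional (ZMod 2) V] (n : ℕ) (hn : Module.finrank (ZMod 2) V = n)
    (e : ExteriorAlgebra (ZMod 2) V) (he : e ∈ ⋀[ZMod 2]^n V) (he0 : e ≠ 0)
    (x : ExteriorAlgebra (ZMod 2) V) (hx : x ≠ 0) :
    ∃ y : ExteriorAlgebra (ZMod 2) V, x * y = e :=
  all_divide_top_form_general V n hn e he x hx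
end

section
/- The ring R = F_2[w₁, w₂, ...] is polynomially generated by the elements p₁, w₂, p₃, w₄, p₅, w₆, ..., i.e., the ring homomorphism from the polynomial ring F_2[t₁, t₂, t₃, ...] sending t_{2i-1} ↦ p_{2i-1} and t_{2i} ↦ w_{2i} is an isomorphism onto R. -/
/-!
Over `𝔽₂` the Newton identity gives `p_{2i-1} = w_{2i-1} + (a polynomial in w₁, …, w_{2i-2})`,
so the substitution `t_n ↦ p_n` (n odd), `t_n ↦ w_n` (n even) is unitriangular with respect to
the order of the variables.  Any substitution `X n ↦ X n + g n` with `g n` a polynomial in the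
`X m`, `m < n`, is an automorphism: its inverse is built by recursion on `n`.
-/

open Finset

namespace MvPolynomial

variable {R : Type*} [CommRing R]

theorem algHom_eq_of_mem_supported {σ A : Type*} [Semiring A] [Algebra R A] {s : Set σ}
    {φ₁ φ₂ : MvPolynomial σ R →ₐ[R] A} (h : ∀ i ∈ s, φ₁ (X i) = φ₂ (X i))
    {q : MvPolynomial σ R} (hq : q ∈ supported R s) : φ₁ q = φ₂ q :=
  AlgHom.adjoin_le_equalizer φ₁ φ₂ (by rintro _ ⟨i, hi, rfl⟩; exact h i hi) hq

/-- The substitution inverse to `X n ↦ f n`, by recursion on `n`; the truncation to `m < n`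
only serves termination and is harmless once `f n - X n` involves only the `X m` with `m < n`
(`unitriangularInv_eq`). -/
noncomputable def unitriangularInv (f : ℕ → MvPolynomial ℕ R) : ℕ → MvPolynomial ℕ R
  | n => X n - aeval (fun m => if m < n then unitriangularInv f m else 0) (f n - X n)

section Unitriangular

variable {f : ℕ → MvPolynomial ℕ R} (hf : ∀ n, f n - X n ∈ supported R (Set.Iio n))
include hf

theorem unitriangularInv_eq (n : ℕ) :
    unitriangularInv f n = X n - aeval (unitriangularInv f) (f n - X n) := by
  rw [unitriangularInv]
  congr 1
  exact algHom_eq_of_mem_supported (fun i hi => by simp [Set.mem_Iio.mp hi]) (hf n)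

theorem aeval_unitriangularInv_comp_aeval :
    (aeval (unitriangularInv f)).comp (aeval f) = AlgHom.id R (MvPolynomial ℕ R) := by
  ext n : 1
  have h := unitriangularInv_eq hf n
  simp only [map_sub, aeval_X] at h
  simp only [AlgHom.comp_apply, aeval_X, AlgHom.id_apply]
  linear_combination h

theorem aeval_unitriangularInv (n : ℕ) : aeval f (unitriangularInv f n) = X n := by
  induction n using Nat.strong_induction_on with
  | _ n ih =>
    have hfix : aeval f (aeval (unitriangularInv f) (f n - X n)) = f n - X n :=
      algHom_eq_of_mem_supported (φ₁ := (aeval f).comp (aeval (unitriangularInv f)))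
        (φ₂ := AlgHom.id R _) (fun i hi => by rw [AlgHom.comp_apply, aeval_X]; exact ih i hi)
        (hf n)
    rw [unitriangularInv_eq hf n, map_sub, hfix, aeval_X]
    ring

theorem aeval_comp_aeval_unitriangularInv :
    (aeval f).comp (aeval (unitriangularInv f)) = AlgHom.id R (MvPolynomial ℕ R) := by
  ext n : 1
  rw [AlgHom.comp_apply, aeval_X, AlgHom.id_apply]
  exact aeval_unitriangularInv hf n

theorem aeval_bijective_of_sub_X_mem_supported :
    Function.Bijective (aeval f : MvPolynomial ℕ R →ₐ[R] MvPolynomial ℕ R) :=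
  (AlgEquiv.ofAlgHom _ _ (aeval_comp_aeval_unitriangularInv hf)
    (aeval_unitriangularInv_comp_aeval hf)).bijective

end Unitriangular

section Newton

variable {p : ℕ → MvPolynomial ℕ R}
  (hp : ∀ m, p (m + 1) =
    ((m + 1 : ℕ) : MvPolynomial ℕ R) * X m - ∑ j ∈ range m, p (m - j) * X j)
include hp

theorem sum_mul_X_mem_supported_of_newton (m : ℕ) :
    ∑ j ∈ range m, p (m - j) * X j ∈ supported R (Set.Iio m) := by
  induction m using Nat.strong_induction_on with
  | _ m ih =>
    refine Subalgebra.sum_mem _ fun j hj => ?_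
    rw [mem_range] at hj
    obtain ⟨k, hk⟩ : ∃ k, m - j = k + 1 := ⟨m - j - 1, by omega⟩
    have hkm : k < m := by omega
    rw [hk, hp k]
    exact mul_mem (sub_mem (mul_mem (Subalgebra.natCast_mem _ _)
      (Algebra.subset_adjoin ⟨k, hkm, rfl⟩))
      (supported_mono (Set.Iio_subset_Iio hkm.le) (ih k hkm)))
      (Algebra.subset_adjoin ⟨j, hj, rfl⟩)

theorem sub_natCast_mul_X_mem_supported_of_newton (m : ℕ) :
    p (m + 1) - ((m + 1 : ℕ) : MvPolynomial ℕ R) * X m ∈ supported R (Set.Iio m) := by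
  rw [hp m, sub_sub_cancel_left]
  exact neg_mem (sum_mul_X_mem_supported_of_newton hp m)

end Newton

end MvPolynomial

open MvPolynomial

theorem succ_eq_natCast_mul_X_sub_sum_of_newton {p : ℕ → MvPolynomial ℕ (ZMod 2)}
    (hp : ∀ k : ℕ, 1 ≤ k →
      (k : MvPolynomial ℕ (ZMod 2)) * w k = ∑ j ∈ Finset.range k, p (k - j) * w j) (m : ℕ) :
    p (m + 1) =
      ((m + 1 : ℕ) : MvPolynomial ℕ (ZMod 2)) * X m - ∑ j ∈ range m, p (m - j) * X j := by
  have h := hp (m + 1) (Nat.le_add_left 1 m)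
  rw [sum_range_succ'] at h
  simp only [Nat.succ_sub_succ, Nat.sub_zero, w, mul_one] at h
  rw [h, add_sub_cancel_left]

/-- `R = 𝔽₂[w₁, w₂, …]` is polynomially generated by `p₁, w₂, p₃, w₄, p₅, w₆, …`:
the algebra homomorphism from the polynomial ring in variables `t₁, t₂, t₃, …`
(where `tₙ` is represented by the index `n - 1 : ℕ`) sending `t_{2i-1} ↦ p_{2i-1}` and
`t_{2i} ↦ w_{2i}` is an isomorphism onto `R`.  Here the power sums `p_k` are defined by
the Newton identity `k · w_k = ∑_{j=0}^{k-1} p_{k-j} · w_j`. -/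
theorem new_coordinates
    (p : ℕ → MvPolynomial ℕ (ZMod 2))
    (hp : ∀ k : ℕ, 1 ≤ k →
      (k : MvPolynomial ℕ (ZMod 2)) * w k = ∑ j ∈ Finset.range k, p (k - j) * w j) :
    Function.Bijective
      (MvPolynomial.aeval
        (fun n : ℕ => if Odd (n + 1) then p (n + 1) else w (n + 1)) :
        MvPolynomial ℕ (ZMod 2) →ₐ[ZMod 2] MvPolynomial ℕ (ZMod 2)) := by
  refine aeval_bijective_of_sub_X_mem_supported fun n => ?_
  split_ifs with hodd
  · have hone : ((n + 1 : ℕ) : MvPolynomial ℕ (ZMod 2)) = 1 := by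
      rw [← map_natCast C, hodd.natCast_zmod_two, map_one]
    simpa [hone] using sub_natCast_mul_X_mem_supported_of_newton
      (succ_eq_natCast_mul_X_sub_sum_of_newton hp) n
  · simp [w]
end

section
/- In R = F_2[w₁, w₂, ...] with involution ω, fixed subring S, and ideal I = {x + ω(x) : x ∈ R} of S, the involution is transverse: RI ∩ S = I, where RI is the ideal of R generated by I. -/
/-!
Write `δ x = x + ω x`. The hypothesis says `ω W = W⁻¹` for the power series `W = ∑ wᵢ tⁱ`, so
`ω` is an involution; and since `W² = ∑ wᵢ² t²ⁱ` in characteristic 2, `δ w_k` agrees with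
`w_{k/2}²` (zero for odd `k`) up to non-squarefree terms of length at least 3. Hence `δ` takes
values in the ideal of non-squarefree polynomials, which therefore contains `R·I`, and `δ` raises
the length filtration `𝔪 ^ l`, `𝔪 = (w₁, w₂, …)`, by one with leading part the derivation `d₁`,
`d₁ w_{2m} = w_m²`, `d₁ w_{2m+1} = 0`. On non-squarefree polynomials `d₁` has an explicit
contracting homotopy `H` lowering the length by one and preserving the weight (`w_k` has weight
`k`). For `z ∈ R·I` fixed by `ω` and lying in `𝔪 ^ l`, `d₁ H z + H d₁ z = z` and `δ z = 0` give
`z + δ (H z) = H (δ z + d₁ z) + (δ + d₁) (H z) ∈ 𝔪 ^ (l + 1)`. Iterating until the length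
exceeds the weight of `z` writes `z` as `δ` of the sum of the corrections.
-/

open Finset

theorem Ideal.mul_mem_pow_of_add_eq {A : Type*} [CommSemiring A] {I : Ideal A} {a b : A}
    {m n k : ℕ} (ha : a ∈ I ^ m) (hb : b ∈ I ^ n) (hk : m + n = k) : a * b ∈ I ^ k :=
  hk ▸ pow_add I m n ▸ Ideal.mul_mem_mul ha hb

section Filtration

variable {A : Type*} [CommRing A] (φ : A →+* A) {S : Set A}

theorem map_sub_self_mem_pow_succ (hφ : ∀ a, φ a - a ∈ Ideal.span S)
    (hS : ∀ s ∈ S, φ s - s ∈ Ideal.span S ^ 2) {n : ℕ} {x : A} (hx : x ∈ Ideal.span S ^ n) :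
    φ x - x ∈ Ideal.span S ^ (n + 1) := by
  set I := Ideal.span S
  have map_mul_sub (a b : A) : φ (a * b) - a * b = (φ a - a) * φ b + a * (φ b - b) := by
    rw [map_mul]; ring
  have map_mem {k : ℕ} {b : A} (hb : b ∈ I ^ k) (h : φ b - b ∈ I ^ (k + 1)) : φ b ∈ I ^ k := by
    simpa using add_mem hb (Ideal.pow_le_pow_right k.le_succ h)
  have h_one : ∀ a ∈ I, φ a - a ∈ I ^ 2 := by
    intro a ha
    induction ha using Submodule.span_induction with
    | mem s hs => exact hS s hs
    | zero => simp
    | add a b _ _ ha hb => simpa [add_sub_add_comm] using add_mem ha hb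
    | smul r a ha' h =>
      rw [smul_eq_mul, map_mul_sub]
      have hφa : φ a ∈ I ^ 1 := map_mem (by simpa using ha') h
      exact add_mem (Ideal.mul_mem_pow_of_add_eq (by simpa using hφ r) hφa rfl)
        (Ideal.mul_mem_left _ _ h)
  induction hx using Submodule.pow_induction_on_left' with
  | algebraMap r => simpa using hφ r
  | add a b i _ _ ha hb => simpa [add_sub_add_comm] using add_mem ha hb
  | mem_mul m hm i b hb h =>
    rw [map_mul_sub]
    refine add_mem ?_ ?_
    · exact Ideal.mul_mem_pow_of_add_eq (h_one m hm) (map_mem hb h) (by omega)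
    · exact Ideal.mul_mem_pow_of_add_eq (m := 1) (by simpa using hm) h (by omega)

theorem map_mul_sub_add_derivation {R : Type*} [CommSemiring R] [Algebra R A]
    (D : Derivation R A A) (a b : A) : φ (a * b) - a * b + D (a * b) =
      (φ a - a + D a) * b + a * (φ b - b + D b) + (φ a - a) * (φ b - b) := by
  rw [map_mul, Derivation.leibniz, smul_eq_mul, smul_eq_mul]; ring

theorem map_sub_self_add_derivation_mem_pow_add_two {R : Type*} [CommSemiring R] [Algebra R A]
    (D : Derivation R A A) (hφ : ∀ a, φ a - a ∈ Ideal.span S)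
    (hS : ∀ s ∈ S, φ s - s ∈ Ideal.span S ^ 2) (hD : ∀ a, φ a - a + D a ∈ Ideal.span S ^ 2)
    (hDS : ∀ s ∈ S, φ s - s + D s ∈ Ideal.span S ^ 3) {n : ℕ} {x : A}
    (hx : x ∈ Ideal.span S ^ n) : φ x - x + D x ∈ Ideal.span S ^ (n + 2) := by
  set I := Ideal.span S
  have hδ {k : ℕ} {b : A} (hb : b ∈ I ^ k) : φ b - b ∈ I ^ (k + 1) :=
    map_sub_self_mem_pow_succ φ hφ hS hb
  have h_one : ∀ a ∈ I, φ a - a + D a ∈ I ^ 3 := by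
    intro a ha
    induction ha using Submodule.span_induction with
    | mem s hs => exact hDS s hs
    | zero => simp
    | add a b _ _ ha hb => simpa [add_sub_add_comm, add_add_add_comm] using add_mem ha hb
    | smul r a ha' h =>
      rw [smul_eq_mul, map_mul_sub_add_derivation]
      have ha : a ∈ I ^ 1 := by simpa using ha'
      exact add_mem (add_mem (Ideal.mul_mem_pow_of_add_eq (hD r) ha rfl)
        (Ideal.mul_mem_left _ _ h))
        (Ideal.mul_mem_pow_of_add_eq (m := 1) (by simpa using hφ r) (hδ ha) rfl)
  induction hx using Submodule.pow_induction_on_left' with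
  | algebraMap r => simpa using hD r
  | add a b i _ _ ha hb => simpa [add_sub_add_comm, add_add_add_comm] using add_mem ha hb
  | mem_mul m hm i b hb h =>
    have hm₁ : m ∈ I ^ 1 := by simpa using hm
    rw [map_mul_sub_add_derivation]
    exact add_mem (add_mem (Ideal.mul_mem_pow_of_add_eq (h_one m hm) hb (by omega))
      (Ideal.mul_mem_pow_of_add_eq hm₁ h (by omega)))
      (Ideal.mul_mem_pow_of_add_eq (hδ hm₁) (hδ hb) (by omega))

end Filtration

theorem map_map_eq_of_sum_mul_map_eq_zero {A : Type*} [CommRing A] {u : ℕ → A} {φ : A →+* A}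
    (h0 : u 0 = 1) (h : ∀ k, 1 ≤ k → ∑ i ∈ range (k + 1), u i * φ (u (k - i)) = 0) (k : ℕ) :
    φ (φ (u k)) = u k := by
  open PowerSeries in
  have hU : mk u * map φ (mk u) = 1 := by
    ext k
    rw [coeff_mul, Nat.sum_antidiagonal_eq_sum_range_succ
      (fun i j => coeff i (mk u) * coeff j (map φ (mk u)))]
    rcases k with _ | k
    · simp [h0]
    · simpa using h (k + 1) (by omega)
  have hUU : mk u = map φ (map φ (mk u)) :=
    left_inv_eq_right_inv hU (by rw [← map_mul, hU, map_one])
  simpa using congrArg (coeff k) hUU.symm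

theorem sum_range_mul_reflect_eq_ite_sq {A : Type*} [CommRing A] [CharP A 2] (u : ℕ → A) (k : ℕ) :
    ∑ i ∈ range (k + 1), u i * u (k - i) = if Even k then u (k / 2) ^ 2 else 0 := by
  rw [← sum_filter_add_sum_filter_not (range (k + 1)) (fun i => 2 * i = k)]
  have h_off : ∑ i ∈ (range (k + 1)).filter (fun i => ¬ 2 * i = k), u i * u (k - i) = 0 := by
    refine sum_involution (fun i _ => k - i) (fun i hi => ?_) (fun i hi _ => ?_)
      (fun i hi => ?_) (fun i hi => ?_) <;> simp only [mem_filter, mem_range] at hi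
    · rw [Nat.sub_sub_self (by omega), mul_comm, CharTwo.add_self_eq_zero]
    · omega
    · simp only [mem_filter, mem_range]; omega
    · exact Nat.sub_sub_self (by omega)
  rw [h_off, add_zero]
  split_ifs with hk
  · obtain ⟨m, rfl⟩ := hk
    have : (range (m + m + 1)).filter (fun i => 2 * i = m + m) = {m} := by
      ext i; simp only [mem_filter, mem_range, mem_singleton]; omega
    rw [this, sum_singleton, sq, show m + m - m = m by omega, show (m + m) / 2 = m by omega]
  · refine sum_eq_zero fun i hi => absurd ⟨i, ?_⟩ hk
    simp only [mem_filter] at hi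
    omega

namespace MvPolynomial

variable {σ R : Type*} [CommSemiring R]

theorem restrictSupport_le_comap {M : Type*} [AddCommMonoid M] [Module R M]
    {f : MvPolynomial σ R →ₗ[R] M} {s : Set (σ →₀ ℕ)} {N : Submodule R M}
    (h : ∀ m ∈ s, f (monomial m 1) ∈ N) : restrictSupport R s ≤ N.comap f := by
  rw [restrictSupport_eq_span, Submodule.span_le]
  rintro _ ⟨m, hm, rfl⟩
  exact h m hm

variable (σ R) in
noncomputable def nonSquarefreeIdeal : Ideal (MvPolynomial σ R) :=
  restrictSupportIdeal R {m | ∃ i, 2 ≤ m i} fun _ _ hle ⟨i, hi⟩ => ⟨i, hi.trans (hle i)⟩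

variable (σ R) in
noncomputable def restrictWeightedTotalDegree (w : σ → ℕ) (n : ℕ) :
    Submodule R (MvPolynomial σ R) :=
  restrictSupport R {m | Finsupp.weight w m ≤ n}

variable {w : σ → ℕ}

theorem restrictWeightedTotalDegree_mono {m n : ℕ} (h : m ≤ n) :
    restrictWeightedTotalDegree σ R w m ≤ restrictWeightedTotalDegree σ R w n :=
  restrictSupport_mono R fun _ hm => le_trans hm h

theorem mul_mem_restrictWeightedTotalDegree {p q : MvPolynomial σ R} {m n : ℕ}
    (hp : p ∈ restrictWeightedTotalDegree σ R w m)
    (hq : q ∈ restrictWeightedTotalDegree σ R w n) :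
    p * q ∈ restrictWeightedTotalDegree σ R w (m + n) := by
  refine restrictSupport_mono R ?_ ((restrictSupport_add R _ _).symm ▸ Submodule.mul_mem_mul hp hq)
  rw [Set.add_subset_iff]
  intro a ha b hb
  simp only [Set.mem_ofPred_eq, map_add] at ha hb ⊢
  omega

theorem one_mem_restrictWeightedTotalDegree {n : ℕ} :
    (1 : MvPolynomial σ R) ∈ restrictWeightedTotalDegree σ R w n := by
  rw [one_def]
  exact (monomial_mem_restrictSupport R).2 (.inl (by simp))

theorem pow_mem_restrictWeightedTotalDegree {p : MvPolynomial σ R} {n : ℕ}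
    (hp : p ∈ restrictWeightedTotalDegree σ R w n) (k : ℕ) :
    p ^ k ∈ restrictWeightedTotalDegree σ R w (k * n) := by
  induction k with
  | zero => simpa using one_mem_restrictWeightedTotalDegree
  | succ k ih => simpa [pow_succ, add_mul] using mul_mem_restrictWeightedTotalDegree ih hp

theorem X_mem_restrictWeightedTotalDegree (i : σ) :
    (X i : MvPolynomial σ R) ∈ restrictWeightedTotalDegree σ R w (w i) := by
  classical
  simp [restrictWeightedTotalDegree, X, Finsupp.weight_single]

theorem map_mem_restrictWeightedTotalDegree {φ : MvPolynomial σ R →+* MvPolynomial σ R}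
    (hC : ∀ r, φ (C r) = C r) (hX : ∀ i, φ (X i) ∈ restrictWeightedTotalDegree σ R w (w i))
    {n : ℕ} {p : MvPolynomial σ R} (hp : p ∈ restrictWeightedTotalDegree σ R w n) :
    φ p ∈ restrictWeightedTotalDegree σ R w n := by
  have h_monomial (m : σ →₀ ℕ) :
      φ (monomial m 1) ∈ restrictWeightedTotalDegree σ R w (Finsupp.weight w m) := by
    induction m using Finsupp.induction with
    | zero => rw [← one_def, map_one]; exact one_mem_restrictWeightedTotalDegree
    | single_add i k m _ _ ih =>
      rw [monomial_single_add, map_mul, map_pow, map_add, Finsupp.weight_single]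
      exact mul_mem_restrictWeightedTotalDegree (pow_mem_restrictWeightedTotalDegree (hX i) k) ih
  let f : MvPolynomial σ R →ₗ[R] MvPolynomial σ R :=
    { φ.toAddMonoidHom with map_smul' r p := by simp [← C_mul', hC] }
  exact restrictSupport_le_comap (f := f) (N := restrictWeightedTotalDegree σ R w n)
    (fun m hm => restrictWeightedTotalDegree_mono hm (h_monomial m)) hp

theorem exists_mem_restrictWeightedTotalDegree (w : σ → ℕ) (p : MvPolynomial σ R) :
    ∃ n, p ∈ restrictWeightedTotalDegree σ R w n :=
  ⟨p.support.sup (Finsupp.weight w), fun _ hm => Finset.le_sup (f := Finsupp.weight w) hm⟩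

theorem eq_zero_of_mem_pow_of_mem_restrictWeightedTotalDegree (hw : ∀ i, 1 ≤ w i)
    {p : MvPolynomial σ R} {l n : ℕ} (hl : p ∈ idealOfVars σ R ^ l)
    (hn : p ∈ restrictWeightedTotalDegree σ R w n) (h : n < l) : p = 0 := by
  by_contra h0
  obtain ⟨m, hm⟩ := support_nonempty.2 h0
  have h1 := (mem_pow_idealOfVars_iff l p).1 hl m hm
  have h2 : Finsupp.weight w m ≤ n := hn hm
  have h3 : m.degree ≤ Finsupp.weight w m := by
    rw [Finsupp.degree_apply, Finsupp.weight_apply, Finsupp.sum]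
    exact Finset.sum_le_sum fun i _ => Nat.le_mul_of_pos_right _ (hw i)
  omega

theorem map_sub_self_mem_of_forall_X {S : Type*} [CommRing S] {J : Ideal (MvPolynomial σ S)}
    {φ : MvPolynomial σ S →+* MvPolynomial σ S} (hC : ∀ r, φ (C r) = C r)
    (hX : ∀ i, φ (X i) - X i ∈ J) (p : MvPolynomial σ S) : φ p - p ∈ J := by
  have : (Ideal.Quotient.mk J).comp φ = Ideal.Quotient.mk J :=
    ringHom_ext (fun r => by simp [hC]) (fun i => by simpa [Ideal.Quotient.eq] using hX i)
  simpa [Ideal.Quotient.eq] using RingHom.congr_fun this p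

end MvPolynomial

namespace FirstTransversality

open MvPolynomial

local notation "𝓡" => MvPolynomial ℕ (ZMod 2)
local notation "𝔪" => idealOfVars ℕ (ZMod 2)
-- `X i = w (i + 1)` gets weight `i + 1`.
local notation "𝒲" => restrictWeightedTotalDegree ℕ (ZMod 2) (· + 1)

noncomputable def sqHalf (k : ℕ) : 𝓡 := if Even k then w (k / 2) ^ 2 else 0

-- `d₁ w_{2m} = w_m²` and `d₁ w_{2m+1} = 0`.
noncomputable def d₁ : Derivation (ZMod 2) 𝓡 𝓡 := mkDerivation (ZMod 2) fun j => sqHalf (j + 1)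

theorem sqHalf_mem {k : ℕ} (hk : 1 ≤ k) :
    sqHalf k ∈ nonSquarefreeIdeal ℕ (ZMod 2) ∧ sqHalf k ∈ 𝔪 ^ 2 ∧ sqHalf k ∈ 𝒲 k := by
  unfold sqHalf
  split_ifs with h
  · obtain ⟨j, rfl⟩ : ∃ j, k = 2 * (j + 1) := ⟨k / 2 - 1, by grind⟩
    rw [show 2 * (j + 1) / 2 = j + 1 by omega, w, X_pow_eq_monomial]
    refine ⟨(monomial_mem_restrictSupport _).2 (.inl ⟨j, by simp⟩), ?_,
      (monomial_mem_restrictSupport _).2 (.inl ?_)⟩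
    · simp [monomial_mem_pow_idealOfVars_iff]
    · simp [Finsupp.weight_single, mul_comm]
  · exact ⟨zero_mem _, zero_mem _, zero_mem _⟩

theorem d₁_X (j : ℕ) : d₁ (X j) = sqHalf (j + 1) := mkDerivation_X _ _ j

theorem sqHalf_odd_add_one (p : ℕ) : sqHalf (2 * p + 1 + 1) = X p ^ 2 := by
  simp [sqHalf, show (2 * p + 1 + 1) / 2 = p + 1 by omega, w, parity_simps]

theorem sqHalf_even_add_one (p : ℕ) : sqHalf (2 * p + 1) = 0 := by
  simp [sqHalf, parity_simps]

section Homotopy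

theorem two_mul_add_one_injective : Function.Injective (2 * · + 1 : ℕ → ℕ) :=
  (add_left_injective 1).comp (mul_right_injective₀ two_ne_zero)

noncomputable def squareAt (m : ℕ →₀ ℕ) (p : ℕ) : ℕ →₀ ℕ :=
  m - Finsupp.single (2 * p + 1) 1 + Finsupp.single p 2

noncomputable def unsquareAt (m : ℕ →₀ ℕ) (p : ℕ) : ℕ →₀ ℕ :=
  m - Finsupp.single p 2 + Finsupp.single (2 * p + 1) 1

theorem squareAt_apply (m : ℕ →₀ ℕ) (p x : ℕ) :
    squareAt m p x = m x - (if x = 2 * p + 1 then 1 else 0) + (if x = p then 2 else 0) := by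
  simp [squareAt, Finsupp.single_apply, eq_comm]

theorem unsquareAt_apply (m : ℕ →₀ ℕ) (p x : ℕ) :
    unsquareAt m p x = m x - (if x = p then 2 else 0) + (if x = 2 * p + 1 then 1 else 0) := by
  simp [unsquareAt, Finsupp.single_apply, eq_comm]

noncomputable def oddPairs (m : ℕ →₀ ℕ) : Finset ℕ :=
  (m.support.preimage (2 * · + 1) two_mul_add_one_injective.injOn).filter
    fun p => m (2 * p + 1) % 2 = 1

theorem mem_oddPairs {m : ℕ →₀ ℕ} {p : ℕ} : p ∈ oddPairs m ↔ m (2 * p + 1) % 2 = 1 := by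
  simp only [oddPairs, mem_filter, Finset.mem_preimage, Finsupp.mem_support_iff,
    and_iff_right_iff_imp]
  omega

theorem d₁_monomial (m : ℕ →₀ ℕ) :
    d₁ (monomial m 1) = ∑ p ∈ oddPairs m, monomial (squareAt m p) 1 := by
  have h_even (j : ℕ) (hj : j ∉ Set.range (2 * · + 1)) :
      monomial (m - Finsupp.single j 1) (m j : ZMod 2) • sqHalf (j + 1) = 0 := by
    have : j % 2 = 0 := by by_contra h; exact hj ⟨j / 2, by simp only; omega⟩
    obtain ⟨p, rfl⟩ : ∃ p, j = 2 * p := ⟨j / 2, by omega⟩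
    rw [sqHalf_even_add_one, smul_zero]
  rw [d₁, mkDerivation_monomial, one_smul, Finsupp.sum, oddPairs, sum_filter,
    ← sum_preimage (2 * · + 1) m.support two_mul_add_one_injective.injOn _
      fun j _ hj => h_even j hj]
  refine sum_congr rfl fun p _ => ?_
  rw [smul_eq_mul, sqHalf_odd_add_one, X_pow_eq_monomial, monomial_mul, mul_one]
  split_ifs with h
  · rw [(ZMod.natCast_eq_one_iff_odd).2 (Nat.odd_iff.2 h)]; rfl
  · rw [(ZMod.natCast_eq_zero_iff_even).2 (Nat.even_iff.2 (by omega)), monomial_zero]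

def IsActive (m : ℕ →₀ ℕ) (p : ℕ) : Prop := 2 ≤ m p ∨ m (2 * p + 1) % 2 = 1

def IsFirstActive (m : ℕ →₀ ℕ) (P : ℕ) : Prop := IsActive m P ∧ ∀ q < P, ¬ IsActive m q

-- Recall `d₁ X (2p+1) = X p ^ 2`. On `X ^ m` the homotopy looks at the first `p` active in `m`:
-- it vanishes if the exponent of `X (2p+1)` is odd, and otherwise trades `X p ^ 2` for
-- `X (2p+1)`. The other terms `squareAt m p'` of `d₁ (X ^ m)` have `p' > p`, and since the
-- exponent of `X p'` only grows by 2, they keep `p` as first active pair: hence `d₁ H + H d₁ = id`.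
open scoped Classical in
noncomputable def homotopyMonomial (m : ℕ →₀ ℕ) : 𝓡 :=
  if h : ∃ p, IsActive m p then
    if m (2 * Nat.find h + 1) % 2 = 1 then 0 else monomial (unsquareAt m (Nat.find h)) 1
  else 0

noncomputable def homotopy : 𝓡 →ₗ[ZMod 2] 𝓡 :=
  (basisMonomials ℕ (ZMod 2)).constr (ZMod 2) homotopyMonomial

theorem homotopy_monomial (m : ℕ →₀ ℕ) : homotopy (monomial m 1) = homotopyMonomial m := by
  simpa [homotopy] using (basisMonomials ℕ (ZMod 2)).constr_basis (ZMod 2) homotopyMonomial m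

theorem homotopyMonomial_of_isFirstActive {m : ℕ →₀ ℕ} {P : ℕ} (hP : IsFirstActive m P) :
    homotopyMonomial m =
      if m (2 * P + 1) % 2 = 1 then 0 else monomial (unsquareAt m P) 1 := by
  classical
  have h : ∃ p, IsActive m p := ⟨P, hP.1⟩
  rw [homotopyMonomial, dif_pos h, (Nat.find_eq_iff h).2 hP]

theorem homotopyMonomial_eq_zero_or (m : ℕ →₀ ℕ) :
    homotopyMonomial m = 0 ∨ ∃ p, 2 ≤ m p ∧ homotopyMonomial m = monomial (unsquareAt m p) 1 := by
  classical
  unfold homotopyMonomial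
  split_ifs with h h'
  · exact .inl rfl
  · exact .inr ⟨_, (Nat.find_spec h).resolve_right h', rfl⟩
  · exact .inl rfl

theorem isActive_squareAt_iff {m : ℕ →₀ ℕ} {p q : ℕ} (hq : q < p) :
    IsActive (squareAt m p) q ↔ IsActive m q := by
  simp only [IsActive, squareAt_apply]
  split_ifs <;> omega

theorem isFirstActive_squareAt {m : ℕ →₀ ℕ} {P p : ℕ} (hP : IsFirstActive m P) (hp : P < p) :
    IsFirstActive (squareAt m p) P :=
  ⟨(isActive_squareAt_iff hp).2 hP.1,
    fun q hq => (isActive_squareAt_iff (hq.trans hp)).not.2 (hP.2 q hq)⟩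

theorem isFirstActive_squareAt_self {m : ℕ →₀ ℕ} {P : ℕ} (hP : ∀ q < P, ¬ IsActive m q) :
    IsFirstActive (squareAt m P) P :=
  ⟨.inl (by rw [squareAt_apply]; split_ifs <;> omega),
    fun q hq => (isActive_squareAt_iff hq).not.2 (hP q hq)⟩

theorem squareAt_apply_two_mul_add_one_mod_two {m : ℕ →₀ ℕ} {P p : ℕ} (hp : p ≠ P) :
    squareAt m p (2 * P + 1) % 2 = m (2 * P + 1) % 2 := by
  rw [squareAt_apply]
  split_ifs <;> omega

theorem unsquareAt_squareAt {m : ℕ →₀ ℕ} {p : ℕ} (h : 1 ≤ m (2 * p + 1)) :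
    unsquareAt (squareAt m p) p = m := by
  ext x
  simp only [unsquareAt_apply, squareAt_apply]
  split_ifs <;> subst_vars <;> omega

theorem squareAt_unsquareAt {m : ℕ →₀ ℕ} {p : ℕ} (h : 2 ≤ m p) :
    squareAt (unsquareAt m p) p = m := by
  ext x
  simp only [unsquareAt_apply, squareAt_apply]
  split_ifs <;> subst_vars <;> omega

theorem squareAt_unsquareAt_comm {m : ℕ →₀ ℕ} {P p : ℕ} (hp : P < p) :
    squareAt (unsquareAt m P) p = unsquareAt (squareAt m p) P := by
  ext x
  simp only [unsquareAt_apply, squareAt_apply]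
  split_ifs <;> omega

theorem oddPairs_unsquareAt {m : ℕ →₀ ℕ} {P : ℕ} (h : 2 ≤ m P) (heven : m (2 * P + 1) % 2 = 0) :
    oddPairs (unsquareAt m P) = insert P (oddPairs m) := by
  ext q
  by_cases hq : q = P
  · subst hq
    simp only [mem_insert, mem_oddPairs, unsquareAt_apply, true_or, iff_true]
    split_ifs <;> omega
  · simp only [mem_insert, mem_oddPairs, unsquareAt_apply, hq, false_or]
    split_ifs <;> subst_vars <;> omega

theorem lt_of_mem_oddPairs {m : ℕ →₀ ℕ} {P p : ℕ} (hP : IsFirstActive m P) (hp : p ∈ oddPairs m)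
    (hpP : p ≠ P) : P < p :=
  lt_of_le_of_ne (not_lt.1 fun h => hP.2 p h (.inr (mem_oddPairs.1 hp))) hpP.symm

theorem sum_homotopyMonomial_squareAt_of_odd {m : ℕ →₀ ℕ} {P : ℕ} (hP : IsFirstActive m P)
    (hodd : m (2 * P + 1) % 2 = 1) :
    ∑ p ∈ oddPairs m, homotopyMonomial (squareAt m p) = monomial m 1 := by
  rw [sum_eq_single_of_mem P (mem_oddPairs.2 hodd)]
  · rw [homotopyMonomial_of_isFirstActive (isFirstActive_squareAt_self hP.2), if_neg,
      unsquareAt_squareAt (by omega)]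
    rw [squareAt_apply]
    split_ifs <;> omega
  · intro p hp hpP
    rw [homotopyMonomial_of_isFirstActive
      (isFirstActive_squareAt hP (lt_of_mem_oddPairs hP hp hpP)),
      if_pos (by rwa [squareAt_apply_two_mul_add_one_mod_two hpP])]

theorem d₁_monomial_unsquareAt_of_even {m : ℕ →₀ ℕ} {P : ℕ} (hP : IsFirstActive m P)
    (heven : ¬ m (2 * P + 1) % 2 = 1) :
    d₁ (monomial (unsquareAt m P) 1) =
      monomial m 1 + ∑ p ∈ oddPairs m, homotopyMonomial (squareAt m p) := by
  have hmP : 2 ≤ m P := hP.1.resolve_right heven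
  rw [d₁_monomial, oddPairs_unsquareAt hmP (by omega),
    sum_insert (fun h => heven (mem_oddPairs.1 h)), squareAt_unsquareAt hmP]
  congr 1
  refine sum_congr rfl fun p hp => ?_
  have hPp := lt_of_mem_oddPairs hP hp fun h => heven (h ▸ mem_oddPairs.1 hp)
  rw [homotopyMonomial_of_isFirstActive (isFirstActive_squareAt hP hPp),
    if_neg (by rwa [squareAt_apply_two_mul_add_one_mod_two hPp.ne']),
    squareAt_unsquareAt_comm hPp]

theorem d₁_homotopy_add_homotopy_d₁_monomial {m : ℕ →₀ ℕ} (hm : ∃ i, 2 ≤ m i) :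
    d₁ (homotopy (monomial m 1)) + homotopy (d₁ (monomial m 1)) = monomial m 1 := by
  classical
  have h : ∃ p, IsActive m p := hm.imp fun _ => .inl
  have hP : IsFirstActive m (Nat.find h) := ⟨Nat.find_spec h, fun _ => Nat.find_min h⟩
  simp only [homotopy_monomial, d₁_monomial, map_sum]
  rw [homotopyMonomial_of_isFirstActive hP]
  split_ifs with hodd
  · rw [map_zero, zero_add, sum_homotopyMonomial_squareAt_of_odd hP hodd]
  · rw [d₁_monomial_unsquareAt_of_even hP hodd, add_assoc, CharTwo.add_self_eq_zero, add_zero]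

theorem d₁_homotopy_add_homotopy_d₁ {z : 𝓡} (hz : z ∈ nonSquarefreeIdeal ℕ (ZMod 2)) :
    d₁ (homotopy z) + homotopy (d₁ z) = z := by
  let f : 𝓡 →ₗ[ZMod 2] 𝓡 :=
    (d₁ : 𝓡 →ₗ[ZMod 2] 𝓡) ∘ₗ homotopy + homotopy ∘ₗ (d₁ : 𝓡 →ₗ[ZMod 2] 𝓡) - LinearMap.id
  have : f z ∈ (⊥ : Submodule (ZMod 2) 𝓡) :=
    restrictSupport_le_comap (N := ⊥)
      (fun m hm => by simp [f, d₁_homotopy_add_homotopy_d₁_monomial hm]) hz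
  simpa [f, sub_eq_zero] using this

theorem degree_unsquareAt {m : ℕ →₀ ℕ} {p : ℕ} (h : 2 ≤ m p) :
    (unsquareAt m p).degree + 1 = m.degree := by
  have := congrArg Finsupp.degree (tsub_add_cancel_of_le (Finsupp.single_le_iff.2 h))
  simp only [unsquareAt, map_add, Finsupp.degree_single] at this ⊢
  omega

theorem weight_unsquareAt {m : ℕ →₀ ℕ} {p : ℕ} (h : 2 ≤ m p) :
    Finsupp.weight (· + 1) (unsquareAt m p) = Finsupp.weight (· + 1) m := by
  have := congrArg (Finsupp.weight (· + 1)) (tsub_add_cancel_of_le (Finsupp.single_le_iff.2 h))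
  simp only [unsquareAt, map_add, Finsupp.weight_single, smul_eq_mul] at this ⊢
  omega

theorem homotopy_mem_pow {l : ℕ} {z : 𝓡} (hz : z ∈ 𝔪 ^ l) : homotopy z ∈ 𝔪 ^ (l - 1) := by
  refine restrictSupport_le_comap (N := (𝔪 ^ (l - 1)).restrictScalars (ZMod 2))
    (s := {m | l ≤ m.degree}) (fun m hm => ?_) ((mem_pow_idealOfVars_iff l z).1 hz)
  rcases homotopyMonomial_eq_zero_or m with h | ⟨p, hp, h⟩ <;>
    simp only [homotopy_monomial, h, Submodule.restrictScalars_mem]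
  · exact zero_mem _
  · rw [monomial_mem_pow_idealOfVars_iff _ _ one_ne_zero]
    have := degree_unsquareAt hp
    simp only [Set.mem_ofPred_eq] at hm
    omega

theorem homotopy_mem_restrictWeightedTotalDegree {n : ℕ} {z : 𝓡} (hz : z ∈ 𝒲 n) :
    homotopy z ∈ 𝒲 n := by
  refine restrictSupport_le_comap (f := homotopy) (N := 𝒲 n) (fun m hm => ?_) hz
  rcases homotopyMonomial_eq_zero_or m with h | ⟨p, hp, h⟩ <;>
    simp only [homotopy_monomial, h]
  · exact zero_mem _
  · simpa [restrictWeightedTotalDegree, weight_unsquareAt hp] using hm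

end Homotopy

section Involution

variable (ω : 𝓡 →+* 𝓡)

theorem map_C (a : ZMod 2) : ω (C a) = C a :=
  RingHom.congr_fun (Subsingleton.elim (ω.comp C) C) a

theorem add_map_w_mem_of_add_sqHalf_mem {k : ℕ}
    (h : 1 ≤ k → w k + ω (w k) + sqHalf k ∈ nonSquarefreeIdeal ℕ (ZMod 2) ∧
      w k + ω (w k) + sqHalf k ∈ 𝔪 ^ 3 ∧ w k + ω (w k) + sqHalf k ∈ 𝒲 k) :
    w k + ω (w k) ∈ nonSquarefreeIdeal ℕ (ZMod 2) ∧ w k + ω (w k) ∈ 𝔪 ^ 2 ∧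
      w k + ω (w k) ∈ 𝒲 k := by
  rcases Nat.eq_zero_or_pos k with rfl | hk
  · simp [w, CharTwo.add_self_eq_zero]
  obtain ⟨h𝒮, h𝔪, h𝒲⟩ := h hk
  obtain ⟨s𝒮, s𝔪, s𝒲⟩ := sqHalf_mem hk
  rw [← add_sub_cancel_right (w k + ω (w k)) (sqHalf k)]
  exact ⟨sub_mem h𝒮 s𝒮, sub_mem (Ideal.pow_le_pow_right (by norm_num) h𝔪) s𝔪, sub_mem h𝒲 s𝒲⟩

theorem map_sub_self (x : 𝓡) : ω x - x = x + ω x := by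
  rw [CharTwo.sub_eq_add, add_comm]

variable (hω : ∀ k : ℕ, 1 ≤ k → ∑ i ∈ range (k + 1), w i * ω (w (k - i)) = 0)
include hω

theorem map_map (x : 𝓡) : ω (ω x) = x := by
  have hw := map_map_eq_of_sum_mul_map_eq_zero rfl hω
  have : ω.comp ω = RingHom.id 𝓡 := ringHom_ext (fun a => by simp [map_C]) fun i => hw (i + 1)
  exact RingHom.congr_fun this x

theorem add_map_w_add_sqHalf {k : ℕ} (hk : 1 ≤ k) :
    w k + ω (w k) + sqHalf k =
      ∑ i ∈ range k, w (i + 1) * (w (k - (i + 1)) + ω (w (k - (i + 1)))) := by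
  have h : ∑ i ∈ range (k + 1), w i * (w (k - i) + ω (w (k - i))) = sqHalf k := by
    simp only [mul_add, sum_add_distrib, hω k hk, add_zero, sum_range_mul_reflect_eq_ite_sq]
    rfl
  rw [← h, sum_range_succ', Nat.sub_zero, w, one_mul, add_comm _ (w k + ω (w k)), ← add_assoc,
    CharTwo.add_self_eq_zero, zero_add]

theorem add_map_w_add_sqHalf_mem {k : ℕ} (hk : 1 ≤ k) :
    w k + ω (w k) + sqHalf k ∈ nonSquarefreeIdeal ℕ (ZMod 2) ∧
      w k + ω (w k) + sqHalf k ∈ 𝔪 ^ 3 ∧ w k + ω (w k) + sqHalf k ∈ 𝒲 k := by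
  induction k using Nat.strong_induction_on with
  | _ k ih =>
  have hg (i : ℕ) (hi : i ∈ range k) := add_map_w_mem_of_add_sqHalf_mem ω (k := k - (i + 1))
    fun h => ih _ (by simp at hi; omega) h
  rw [add_map_w_add_sqHalf ω hω hk]
  refine ⟨sum_mem fun i hi => Ideal.mul_mem_left _ _ (hg i hi).1, sum_mem fun i hi => ?_,
    sum_mem fun i hi => ?_⟩
  · have hX : w (i + 1) ∈ 𝔪 ^ 1 := by
      rw [pow_one]; exact Ideal.subset_span (Set.mem_range_self i)
    exact Ideal.mul_mem_pow_of_add_eq hX (hg i hi).2.1 rfl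
  · refine restrictWeightedTotalDegree_mono ?_
      (mul_mem_restrictWeightedTotalDegree (X_mem_restrictWeightedTotalDegree i) (hg i hi).2.2)
    simp at hi
    omega

theorem add_map_X_mem (i : ℕ) :
    X i + ω (X i) ∈ nonSquarefreeIdeal ℕ (ZMod 2) ∧ X i + ω (X i) ∈ 𝔪 ^ 2 ∧
      X i + ω (X i) ∈ 𝒲 (i + 1) := by
  simpa only [w] using
    add_map_w_mem_of_add_sqHalf_mem ω (k := i + 1) fun h => add_map_w_add_sqHalf_mem ω hω h

theorem add_map_X_add_d₁_mem (i : ℕ) : X i + ω (X i) + d₁ (X i) ∈ 𝔪 ^ 3 := by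
  simpa only [d₁_X, w] using (add_map_w_add_sqHalf_mem ω hω (by omega : 1 ≤ i + 1)).2.1

theorem add_map_mem_nonSquarefreeIdeal (x : 𝓡) : x + ω x ∈ nonSquarefreeIdeal ℕ (ZMod 2) := by
  rw [← map_sub_self]
  exact map_sub_self_mem_of_forall_X (map_C ω)
    (fun i => by rw [map_sub_self]; exact (add_map_X_mem ω hω i).1) x

theorem add_map_mem_idealOfVars (x : 𝓡) : x + ω x ∈ 𝔪 := by
  rw [← map_sub_self]
  exact map_sub_self_mem_of_forall_X (map_C ω) (fun i => by
    rw [map_sub_self]; exact Ideal.pow_le_self two_ne_zero (add_map_X_mem ω hω i).2.1) x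

theorem map_mem_restrictWeightedTotalDegree {n : ℕ} {x : 𝓡} (hx : x ∈ 𝒲 n) : ω x ∈ 𝒲 n :=
  MvPolynomial.map_mem_restrictWeightedTotalDegree (map_C ω) (fun i => by
    simpa [← add_assoc, CharTwo.add_self_eq_zero] using
      add_mem (X_mem_restrictWeightedTotalDegree i) (add_map_X_mem ω hω i).2.2) hx

theorem add_map_add_d₁_mem_sq (x : 𝓡) : x + ω x + d₁ x ∈ 𝔪 ^ 2 := by
  induction x using MvPolynomial.induction_on with
  | C a => simp [map_C, CharTwo.add_self_eq_zero]
  | add p q hp hq => convert add_mem hp hq using 1; rw [map_add, map_add]; ring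
  | mul_X p i hp =>
    rw [← map_sub_self, map_mul_sub_add_derivation, map_sub_self, map_sub_self]
    refine add_mem (add_mem (Ideal.mul_mem_right _ _ hp) (Ideal.mul_mem_left _ _ ?_))
      (Ideal.mul_mem_left _ _ (add_map_X_mem ω hω i).2.1)
    exact Ideal.pow_le_pow_right (by norm_num) (add_map_X_add_d₁_mem ω hω i)

theorem add_map_add_d₁_mem_pow {n : ℕ} {x : 𝓡} (hx : x ∈ 𝔪 ^ n) :
    x + ω x + d₁ x ∈ 𝔪 ^ (n + 2) := by
  simpa only [map_sub_self] using map_sub_self_add_derivation_mem_pow_add_two ω d₁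
    (fun a => by rw [map_sub_self]; exact add_map_mem_idealOfVars ω hω a)
    (Set.forall_mem_range.2 fun i => by rw [map_sub_self]; exact (add_map_X_mem ω hω i).2.1)
    (fun a => by rw [map_sub_self]; exact add_map_add_d₁_mem_sq ω hω a)
    (Set.forall_mem_range.2 fun i => by rw [map_sub_self]; exact add_map_X_add_d₁_mem ω hω i) hx

theorem span_range_add_map_le_nonSquarefreeIdeal :
    Ideal.span (Set.range fun y => y + ω y) ≤ nonSquarefreeIdeal ℕ (ZMod 2) :=
  Ideal.span_le.2 (Set.range_subset_iff.2 (add_map_mem_nonSquarefreeIdeal ω hω))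

theorem add_homotopy_add_map_mem_pow_succ {l : ℕ} {z : 𝓡}
    (h𝒮 : z ∈ nonSquarefreeIdeal ℕ (ZMod 2)) (hfix : ω z = z) (hz : z ∈ 𝔪 ^ l) :
    z + (homotopy z + ω (homotopy z)) ∈ 𝔪 ^ (l + 1) := by
  have key : z + (homotopy z + ω (homotopy z)) =
      homotopy (z + ω z + d₁ z) + (homotopy z + ω (homotopy z) + d₁ (homotopy z)) := by
    rw [hfix, CharTwo.add_self_eq_zero, zero_add]
    nth_rw 1 [← d₁_homotopy_add_homotopy_d₁ h𝒮]
    ring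
  rw [key]
  exact add_mem (by simpa using homotopy_mem_pow (add_map_add_d₁_mem_pow ω hω hz))
    (Ideal.pow_le_pow_right (by omega) (add_map_add_d₁_mem_pow ω hω (homotopy_mem_pow hz)))

theorem exists_add_map_eq (k : ℕ) :
    ∀ {l n : ℕ} {z : 𝓡}, n < l + k → z ∈ 𝔪 ^ l → z ∈ 𝒲 n →
      z ∈ nonSquarefreeIdeal ℕ (ZMod 2) → ω z = z → ∃ y, y + ω y = z := by
  induction k with
  | zero =>
    intro l n z hnl hz hzn _ _
    refine ⟨0, ?_⟩
    rw [eq_zero_of_mem_pow_of_mem_restrictWeightedTotalDegree (fun _ => Nat.succ_pos _) hz hzn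
      (by omega), map_zero, add_zero]
  | succ k ih =>
    intro l n z hnl hz hzn h𝒮 hfix
    set y := homotopy z
    have hyn : y ∈ 𝒲 n := homotopy_mem_restrictWeightedTotalDegree hzn
    obtain ⟨y', hy'⟩ := ih (l := l + 1) (by omega)
      (add_homotopy_add_map_mem_pow_succ ω hω h𝒮 hfix hz)
      (add_mem hzn (add_mem hyn (map_mem_restrictWeightedTotalDegree ω hω hyn)))
      (add_mem h𝒮 (add_map_mem_nonSquarefreeIdeal ω hω y))
      (by rw [map_add, map_add, map_map ω hω, hfix, add_comm (ω y)])
    refine ⟨y' + y, ?_⟩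
    rw [map_add, add_add_add_comm, hy', add_assoc, CharTwo.add_self_eq_zero, add_zero]

end Involution

end FirstTransversality

/-- First Transversality Theorem: in `R = 𝔽₂[w₁, w₂, …]` with the involution `ω`
defined by `∑_{i=0}^{k} wᵢ · ω (w_{k-i}) = 0`, fixed subring `S = {x : ω x = x}` and
`I = {y + ω y : y ∈ R}`, we have `R·I ∩ S = I`, where `R·I` is the ideal of `R`
generated by `I`. -/
theorem first_transversality
    (ω : MvPolynomial ℕ (ZMod 2) →+* MvPolynomial ℕ (ZMod 2))
    (hω : ∀ k : ℕ, 1 ≤ k → ∑ i ∈ Finset.range (k + 1), w i * ω (w (k - i)) = 0) :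
    {x : MvPolynomial ℕ (ZMod 2) |
        x ∈ Ideal.span (Set.range fun y : MvPolynomial ℕ (ZMod 2) => y + ω y) ∧
        ω x = x} =
      Set.range (fun y : MvPolynomial ℕ (ZMod 2) => y + ω y) := by
  ext x
  constructor
  · rintro ⟨hspan, hfix⟩
    obtain ⟨n, hn⟩ := MvPolynomial.exists_mem_restrictWeightedTotalDegree (· + 1) x
    exact FirstTransversality.exists_add_map_eq ω hω (n + 1) (l := 0) (by omega) (by simp) hn
      (FirstTransversality.span_range_add_map_le_nonSquarefreeIdeal ω hω hspan) hfix
  · rintro ⟨y, rfl⟩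
    exact ⟨Ideal.subset_span ⟨y, rfl⟩, by rw [map_add, FirstTransversality.map_map ω hω, add_comm]⟩
end
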